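/- arXiv:1102.5031 — 5 statements merged into one kernel-verified Lean document; each statement's English description precedes it below -/
import Mathlib

section
/- For every integer k with 1 ≤ k ≤ 4 there exists a polynomial M(y_1, …, y_k) of degree k with nonnegative coefficients such that for all p, q ∈ 𝒫, all α ∈ [0,1], and all x ∈ ℝ, the density r_α = α·p + (1−α)·q satisfies |(ln r_α)^{(k)}(x)| ≤ M( max{ |p'(x)|/p(x), |q'(x)|/q(x) }, …, max{ |p^{(k)}(x)|/p(x), |q^{(k)}(x)|/q(x) } ). -/
open MeasureTheory Filter Set

noncomputable section

/-- The class `𝒫` of smooth, positive, rapidly decaying probability densities. -/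
def memP (p : ℝ → ℝ) : Prop :=
  (∫ x, p x) = 1 ∧
  (∀ x, 0 < p x) ∧
  ContDiff ℝ 4 p ∧
  (∀ m : ℝ, 0 < m → ∀ j ≤ 4,
    Tendsto (fun x => |x| ^ m * iteratedDeriv j p x) (atTop ⊔ atBot) (nhds 0)) ∧
  (∃ a : ℝ, 0 < a ∧ ∀ j, 1 ≤ j → j ≤ 4 →
    Tendsto (fun x => |x| ^ (-a) * (iteratedDeriv j p x / p x)) (atTop ⊔ atBot) (nhds 0))

/-- `j`-th derivative of the log-likelihood of `p`. -/
def ld (p : ℝ → ℝ) (j : ℕ) (x : ℝ) : ℝ := iteratedDeriv j (fun t => Real.log (p t)) x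

def uncurry3 (K : ℝ → ℝ → ℝ → ℝ) : ℝ × ℝ × ℝ → ℝ := fun v => K v.1 v.2.1 v.2.2

/-- The class `ℛ₁`. -/
def memR1 (K : ℝ → ℝ → ℝ → ℝ) : Prop :=
  ContDiff ℝ 2 (uncurry3 K) ∧
  ∃ C r : ℝ, 0 < C ∧ 0 < r ∧ ∀ i ≤ 2, ∀ x y0 y1 : ℝ,
    ‖iteratedFDeriv ℝ i (uncurry3 K) (x, y0, y1)‖ ≤
      C * ((1 + |x|) * (1 + |y0|) * (1 + |y1|)) ^ r

def uncurry4 (s : ℝ → ℝ → ℝ → ℝ → ℝ) : ℝ × ℝ × ℝ × ℝ → ℝ :=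
  fun v => s v.1 v.2.1 v.2.2.1 v.2.2.2

/-- The class `ℛ₂`. -/
def memR2 (s : ℝ → ℝ → ℝ → ℝ → ℝ) : Prop :=
  ContDiff ℝ 4 (uncurry4 s) ∧
  ∃ C r : ℝ, 0 < C ∧ 0 < r ∧ ∀ i ≤ 4, ∀ x y0 y1 y2 : ℝ,
    ‖iteratedFDeriv ℝ i (uncurry4 s) (x, y0, y1, y2)‖ ≤
      C * ((1 + |x|) * (1 + |y0|) * (1 + |y1|) * (1 + |y2|)) ^ r

/-- Propriety of a scoring rule relative to `𝒫`. -/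
def Proper (S : ℝ → (ℝ → ℝ) → ℝ) : Prop :=
  ∀ p q, memP p → memP q → (∫ x, S x p * p x) ≤ ∫ x, S x q * p x

/-- Strict propriety relative to `𝒫`. -/
def StrictlyProper (S : ℝ → (ℝ → ℝ) → ℝ) : Prop :=
  ∀ p q, memP p → memP q →
    (∫ x, S x p * p x) ≤ (∫ x, S x q * p x) ∧
    ((∫ x, S x p * p x) = (∫ x, S x q * p x) → q = p)

/-- Concavity of a functional on `𝒫`. -/
def ConcaveOnP (Φ : (ℝ → ℝ) → ℝ) : Prop :=
  ∀ p q, memP p → memP q → ∀ t ∈ Icc (0:ℝ) 1,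
    t * Φ p + (1 - t) * Φ q ≤ Φ (fun x => t * p x + (1 - t) * q x)

/-- Strict concavity of a functional on `𝒫`. -/
def StrictConcaveOnP (Φ : (ℝ → ℝ) → ℝ) : Prop :=
  ∀ p q, memP p → memP q → p ≠ q → ∀ t ∈ Ioo (0:ℝ) 1,
    t * Φ p + (1 - t) * Φ q < Φ (fun x => t * p x + (1 - t) * q x)

/-- Partial derivatives of a kernel of three arguments. -/
def qd0 (K : ℝ → ℝ → ℝ → ℝ) (x y0 y1 : ℝ) : ℝ := deriv (fun u => K x u y1) y0
def qd1 (K : ℝ → ℝ → ℝ → ℝ) (x y0 y1 : ℝ) : ℝ := deriv (fun u => K x y0 u) y1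

/-- Partial derivatives of a kernel of four arguments. -/
def pd0 (s : ℝ → ℝ → ℝ → ℝ → ℝ) (x y0 y1 y2 : ℝ) : ℝ := deriv (fun u => s x u y1 y2) y0
def pd1 (s : ℝ → ℝ → ℝ → ℝ → ℝ) (x y0 y1 y2 : ℝ) : ℝ := deriv (fun u => s x y0 u y2) y1
def pd2 (s : ℝ → ℝ → ℝ → ℝ → ℝ) (x y0 y1 y2 : ℝ) : ℝ := deriv (fun u => s x y0 y1 u) y2

/-- Evaluation of a three-argument kernel along the log-likelihood of `p`. -/
def ev1 (K : ℝ → ℝ → ℝ → ℝ) (p : ℝ → ℝ) (x : ℝ) : ℝ := K x (ld p 0 x) (ld p 1 x)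

/-- Evaluation of a four-argument kernel along the log-likelihood of `p`. -/
def ev2 (s : ℝ → ℝ → ℝ → ℝ → ℝ) (p : ℝ → ℝ) (x : ℝ) : ℝ :=
  s x (ld p 0 x) (ld p 1 x) (ld p 2 x)

/-- The functional `Φ_K` for `K ∈ ℛ₁`. -/
def PhiK1 (K : ℝ → ℝ → ℝ → ℝ) (p : ℝ → ℝ) : ℝ := ∫ x, ev1 K p x * p x

/-- The functional `Φ_K` for `K ∈ ℛ₂`. -/
def PhiK2 (s : ℝ → ℝ → ℝ → ℝ → ℝ) (p : ℝ → ℝ) : ℝ := ∫ x, ev2 s p x * p x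

/-- The scoring function built from the kernel `c·y₀ + K₀(x,y₁)` via the tangent
construction. -/
def sFromK0 (c : ℝ) (K0 : ℝ → ℝ → ℝ) (x y0 y1 y2 : ℝ) : ℝ :=
  c * y0 + K0 x y1 - y1 * deriv (K0 x) y1
    - deriv (fun u => deriv (K0 u) y1) x
    - y2 * deriv (deriv (K0 x)) y1

end

/-!
Put `r = α p + (1 - α) q`. Since `r⁽ʲ⁾ = α p⁽ʲ⁾ + (1 - α) q⁽ʲ⁾`, each ratio `|r⁽ʲ⁾| / r` is a
weighted mediant of `|p⁽ʲ⁾| / p` and `|q⁽ʲ⁾| / q`, hence at most their maximum. On the other hand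
`(log r)⁽ᵏ⁾` is a universal polynomial `P_k` in the ratios `r⁽ʲ⁾ / r`, obtained from
`(log r)' = r' / r` and `(r⁽ʲ⁾ / r)' = r⁽ʲ⁺¹⁾ / r - (r⁽ʲ⁾ / r) (r' / r)`. Taking `M` to be `P_k`
with its coefficients replaced by their absolute values gives the bound.
-/

namespace MvPolynomial

variable {σ : Type*}

theorem totalDegree_eq_of_coeff {R : Type*} [CommSemiring R] {P : MvPolynomial σ R} {n : ℕ}
    (hle : ∀ s : σ →₀ ℕ, n < s.degree → P.coeff s = 0) (s₀ : σ →₀ ℕ) (hs₀ : s₀.degree = n)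
    (hc : P.coeff s₀ ≠ 0) : P.totalDegree = n := by
  refine le_antisymm (Finset.sup_le fun s hs => ?_) ?_
  · by_contra! hlt
    exact mem_support_iff.mp hs (hle s (by rwa [Finsupp.degree_apply]))
  · rw [← hs₀, Finsupp.degree_apply]
    exact le_totalDegree (mem_support_iff.mpr hc)

noncomputable def absCoeffs (P : MvPolynomial σ ℝ) : MvPolynomial σ ℝ :=
  ∑ s ∈ P.support, monomial s |P.coeff s|

@[simp]
theorem coeff_absCoeffs (P : MvPolynomial σ ℝ) (s : σ →₀ ℕ) :
    (absCoeffs P).coeff s = |P.coeff s| := by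
  classical
  simp only [absCoeffs, coeff_sum, coeff_monomial, Finset.sum_ite_eq', mem_support_iff]
  split_ifs with h
  · rfl
  · rw [not_not.mp h, abs_zero]

@[simp]
theorem support_absCoeffs (P : MvPolynomial σ ℝ) : (absCoeffs P).support = P.support := by
  ext s
  simp [mem_support_iff]

@[simp]
theorem totalDegree_absCoeffs (P : MvPolynomial σ ℝ) :
    (absCoeffs P).totalDegree = P.totalDegree := by
  simp only [totalDegree, support_absCoeffs]

theorem abs_eval_le_eval_absCoeffs (P : MvPolynomial σ ℝ) {u m : σ → ℝ}
    (h : ∀ i, |u i| ≤ m i) : |eval u P| ≤ eval m (absCoeffs P) := by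
  rw [eval_eq, eval_eq, support_absCoeffs]
  refine (Finset.abs_sum_le_sum_abs _ _).trans (Finset.sum_le_sum fun s _ => ?_)
  rw [abs_mul, coeff_absCoeffs, Finset.abs_prod]
  gcongr with i
  rw [abs_pow]
  exact pow_le_pow_left₀ (abs_nonneg _) (h i) _

end MvPolynomial

open MvPolynomial

theorem abs_mul_add_mul_div_le_max {a b p q α β : ℝ} (hp : 0 < p) (hq : 0 < q) (hα : 0 ≤ α)
    (hβ : 0 ≤ β) : |α * a + β * b| / (α * p + β * q) ≤ max (|a| / p) (|b| / q) := by
  set m := max (|a| / p) (|b| / q)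
  have ha : |a| ≤ m * p := (div_le_iff₀ hp).mp (le_max_left _ _)
  have hb : |b| ≤ m * q := (div_le_iff₀ hq).mp (le_max_right _ _)
  have hm : 0 ≤ m := (div_nonneg (abs_nonneg a) hp.le).trans (le_max_left _ _)
  refine div_le_of_le_mul₀ (by positivity) hm ?_
  calc |α * a + β * b| ≤ α * |a| + β * |b| := by
        simpa only [abs_mul, abs_of_nonneg hα, abs_of_nonneg hβ] using abs_add_le (α * a) (β * b)
    _ ≤ α * (m * p) + β * (m * q) := by gcongr
    _ = m * (α * p + β * q) := by ring

theorem iteratedDeriv_mul_add_mul {n : ℕ} {f g : ℝ → ℝ} (hf : ContDiff ℝ n f)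
    (hg : ContDiff ℝ n g) (a b x : ℝ) :
    iteratedDeriv n (fun t => a * f t + b * g t) x =
      a * iteratedDeriv n f x + b * iteratedDeriv n g x := by
  rw [iteratedDeriv_fun_add (contDiff_const.mul hf).contDiffAt
    (contDiff_const.mul hg).contDiffAt,
    iteratedDeriv_const_mul_field, iteratedDeriv_const_mul_field]

section LogDeriv

variable {r : ℝ → ℝ}

noncomputable def relIteratedDeriv (r : ℝ → ℝ) (j : ℕ) (x : ℝ) : ℝ := iteratedDeriv j r x / r x

local notation "u" => relIteratedDeriv r

theorem hasDerivAt_iteratedDeriv {n j : ℕ} (hr : ContDiff ℝ n r) (hj : j < n) (x : ℝ) :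
    HasDerivAt (iteratedDeriv j r) (iteratedDeriv (j + 1) r x) x := by
  rw [iteratedDeriv_succ]
  exact (hr.differentiable_iteratedDeriv j (by exact_mod_cast hj) x).hasDerivAt

theorem hasDerivAt_relIteratedDeriv {n j : ℕ} (hr : ContDiff ℝ n r) (hj : j < n) {x : ℝ}
    (hx : r x ≠ 0) : HasDerivAt (u j) (u (j + 1) x - u j x * u 1 x) x := by
  have hr' := hasDerivAt_iteratedDeriv hr (j := 0) (by omega) x
  rw [iteratedDeriv_zero] at hr'
  refine ((hasDerivAt_iteratedDeriv hr hj x).fun_div hr' hx).congr_deriv ?_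
  simp only [relIteratedDeriv, zero_add]
  field_simp

theorem iteratedDeriv_one_log (hr0 : ∀ x, r x ≠ 0) (hr : ContDiff ℝ 1 r) :
    iteratedDeriv 1 (fun t => Real.log (r t)) = u 1 := by
  funext x
  have hr' := hasDerivAt_iteratedDeriv hr (j := 0) one_pos x
  rw [iteratedDeriv_zero] at hr'
  rw [iteratedDeriv_one, (hr'.log (hr0 x)).deriv, relIteratedDeriv]

theorem iteratedDeriv_two_log (hr0 : ∀ x, r x ≠ 0) (hr : ContDiff ℝ 2 r) :
    iteratedDeriv 2 (fun t => Real.log (r t)) = fun x => u 2 x - u 1 x ^ 2 := by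
  funext x
  have h1 := hasDerivAt_relIteratedDeriv hr (j := 1) (by norm_num) (hr0 x)
  rw [iteratedDeriv_succ, iteratedDeriv_one_log hr0 (hr.of_le (by norm_num)), h1.deriv]
  ring

theorem iteratedDeriv_three_log (hr0 : ∀ x, r x ≠ 0) (hr : ContDiff ℝ 3 r) :
    iteratedDeriv 3 (fun t => Real.log (r t)) =
      fun x => u 3 x - 3 * u 2 x * u 1 x + 2 * u 1 x ^ 3 := by
  funext x
  have h1 := hasDerivAt_relIteratedDeriv hr (j := 1) (by norm_num) (hr0 x)
  have h2 := hasDerivAt_relIteratedDeriv hr (j := 2) (by norm_num) (hr0 x)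
  rw [iteratedDeriv_succ, iteratedDeriv_two_log hr0 (hr.of_le (by norm_num)),
    (h2.fun_sub (h1.fun_pow 2)).deriv]
  ring

theorem iteratedDeriv_four_log (hr0 : ∀ x, r x ≠ 0) (hr : ContDiff ℝ 4 r) :
    iteratedDeriv 4 (fun t => Real.log (r t)) = fun x =>
      u 4 x - 4 * u 3 x * u 1 x - 3 * u 2 x ^ 2 + 12 * u 2 x * u 1 x ^ 2 - 6 * u 1 x ^ 4 := by
  funext x
  have h1 := hasDerivAt_relIteratedDeriv hr (j := 1) (by norm_num) (hr0 x)
  have h2 := hasDerivAt_relIteratedDeriv hr (j := 2) (by norm_num) (hr0 x)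
  have h3 := hasDerivAt_relIteratedDeriv hr (j := 3) (by norm_num) (hr0 x)
  rw [iteratedDeriv_succ, iteratedDeriv_three_log hr0 (hr.of_le (by norm_num)),
    ((h3.fun_sub ((h2.const_mul 3).fun_mul h1)).fun_add ((h1.fun_pow 3).const_mul 2)).deriv]
  ring

end LogDeriv

/-- The variable `X i` stands for `r⁽ⁱ⁺¹⁾ / r`. -/
noncomputable def logDerivPoly : (k : ℕ) → MvPolynomial (Fin k) ℝ
  | 1 => X 0
  | 2 => X 1 - X 0 ^ 2
  | 3 => X 2 - 3 * X 1 * X 0 + 2 * X 0 ^ 3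
  | 4 => X 3 - 4 * X 2 * X 0 - 3 * X 1 ^ 2 + 12 * X 1 * X 0 ^ 2 - 6 * X 0 ^ 4
  | _ => 0

theorem iteratedDeriv_log_eq_eval_logDerivPoly {k : ℕ} (hk1 : 1 ≤ k) (hk4 : k ≤ 4)
    {r : ℝ → ℝ} (hr : ContDiff ℝ k r) (hr0 : ∀ x, r x ≠ 0) (x : ℝ) :
    iteratedDeriv k (fun t => Real.log (r t)) x =
      eval (fun i : Fin k => relIteratedDeriv r (i + 1) x) (logDerivPoly k) := by
  interval_cases k
  · simp [logDerivPoly, iteratedDeriv_one_log hr0 hr]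
  · simp [logDerivPoly, iteratedDeriv_two_log hr0 hr]
  · simp [logDerivPoly, iteratedDeriv_three_log hr0 hr]
  · simp [logDerivPoly, iteratedDeriv_four_log hr0 hr]

theorem totalDegree_logDerivPoly {k : ℕ} (hk1 : 1 ≤ k) (hk4 : k ≤ 4) :
    (logDerivPoly k).totalDegree = k := by
  -- `X 0 ^ k` occurs with coefficient `±(k - 1)!`.
  refine totalDegree_eq_of_coeff (fun s hs => ?_) (Finsupp.single ⟨0, hk1⟩ k) (by simp) ?_
  · have hdeg : ∀ t : Fin k →₀ ℕ, t.degree ≤ k → (t = s ↔ False) :=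
      fun t ht => ⟨by rintro rfl; omega, False.elim⟩
    interval_cases k <;>
      simp [logDerivPoly, X, monomial_pow, mul_assoc, monomial_mul, coeff_monomial, coeff_C_mul,
        ← map_ofNat C, hdeg]
  · interval_cases k <;>
      simp [logDerivPoly, X, monomial_pow, mul_assoc, monomial_mul, coeff_monomial, coeff_C_mul,
        ← map_ofNat C, Finsupp.ext_iff, Fin.forall_fin_succ]

theorem statement0 (k : ℕ) (hk1 : 1 ≤ k) (hk4 : k ≤ 4) :
    ∃ M : MvPolynomial (Fin k) ℝ,
      M.totalDegree = k ∧
      (∀ m, 0 ≤ M.coeff m) ∧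
      ∀ p q : ℝ → ℝ, memP p → memP q → ∀ α ∈ Set.Icc (0:ℝ) 1, ∀ x : ℝ,
        |iteratedDeriv k (fun t => Real.log (α * p t + (1 - α) * q t)) x| ≤
          MvPolynomial.eval
            (fun i : Fin k =>
              max (|iteratedDeriv ((i : ℕ) + 1) p x| / p x)
                  (|iteratedDeriv ((i : ℕ) + 1) q x| / q x)) M := by
  refine ⟨absCoeffs (logDerivPoly k), ?_, fun s => by simp only [coeff_absCoeffs, abs_nonneg], ?_⟩
  · rw [totalDegree_absCoeffs, totalDegree_logDerivPoly hk1 hk4]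
  rintro p q ⟨-, hp_pos, hp, -⟩ ⟨-, hq_pos, hq, -⟩ α ⟨hα0, hα1⟩ x
  have hr_pos : ∀ t, 0 < α * p t + (1 - α) * q t := fun t => by
    rcases hα0.eq_or_lt with rfl | hα
    · simpa using hq_pos t
    · exact add_pos_of_pos_of_nonneg (mul_pos hα (hp_pos t))
        (mul_nonneg (by linarith) (hq_pos t).le)
  have hr : ContDiff ℝ 4 (fun t => α * p t + (1 - α) * q t) :=
    (contDiff_const.mul hp).add (contDiff_const.mul hq)
  rw [iteratedDeriv_log_eq_eval_logDerivPoly hk1 hk4 (hr.of_le (by exact_mod_cast hk4))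
    (fun t => (hr_pos t).ne')]
  refine abs_eval_le_eval_absCoeffs _ fun i => ?_
  have hj : (i : ℕ) + 1 ≤ 4 := by omega
  rw [relIteratedDeriv, abs_div, abs_of_pos (hr_pos x),
    iteratedDeriv_mul_add_mul (hp.of_le (by exact_mod_cast hj))
      (hq.of_le (by exact_mod_cast hj))]
  exact abs_mul_add_mul_div_le_max (hp_pos x) (hq_pos x) hα0 (by linarith)
end

section
/- Let c ∈ ℝ and K_0 : ℝ² → ℝ, and define K(x, y_0, y_1) = c·y_0 + K_0(x, y_1). Suppose (i) K ∈ ℛ_1, (ii) c ≤ 0, and (iii) for every x ∈ ℝ the map y_1 ↦ K_0(x, y_1) is concave. Then the functional Φ_K : 𝒫 → ℝ is concave, i.e., Φ_K(t·p + (1−t)·q) ≥ t·Φ_K(p) + (1−t)·Φ_K(q) for all p, q ∈ 𝒫 and t ∈ [0,1]. Moreover, if c < 0, or if c ≤ 0 and y_1 ↦ K_0(x, y_1) is strictly concave for every x, then Φ_K is strictly concave, i.e., the inequality is strict whenever p ≠ q and t ∈ (0,1). -/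
open MeasureTheory Filter Set

/-!
The integrand of `Φ_K` at `x` is `c · p log p + p · K₀(x, p'/p)`, a function of the pair
`(p x, p' x)`, and the mixture `t p + (1 - t) q` mixes these pairs linearly. The first summand is
concave in `p x` because `a ↦ a log a` is convex and `c ≤ 0`; the second is the perspective
`(a, u) ↦ a K₀(x, u / a)` of a concave function, hence jointly concave. Integrating this pointwise
inequality gives concavity; all integrals exist because `log p` and `p'/p` grow at most
polynomially while `p` decays faster than any polynomial, and the growth bound on `K` turns this
into integrability.

The pointwise inequality is strict wherever `p x ≠ q x` when `c < 0`, and wherever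
`p'/p ≠ q'/q` when `K₀` is strictly concave; such a point exists when `p ≠ q`, since equal
log-derivatives make `p / q` constant and both densities have mass one. By continuity, strictness
at one point gives a strict inequality between the integrals.
-/

open Topology

def HasPolyGrowth (g : ℝ → ℝ) : Prop :=
  ∃ k : ℕ, ∃ C : ℝ, ∀ x, |g x| ≤ C * (1 + |x|) ^ k

def HasRapidDecay (g : ℝ → ℝ) : Prop :=
  ∀ k : ℕ, ∃ C : ℝ, ∀ x, (1 + |x|) ^ k * |g x| ≤ C

lemma tendsto_abs_atTop_sup_atBot : Tendsto (fun x : ℝ => |x|) (atTop ⊔ atBot) atTop :=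
  tendsto_abs_atTop_atTop.sup tendsto_abs_atBot_atTop

lemma exists_abs_le_of_eventually_abs_le {f g : ℝ → ℝ} (hf : Continuous f)
    (hg : Tendsto g (atTop ⊔ atBot) (𝓝 0)) {C : ℝ}
    (hfg : ∀ᶠ x in atTop ⊔ atBot, |f x| ≤ C * |g x|) : ∃ M, ∀ x, |f x| ≤ M := by
  have hO : f =O[cocompact ℝ] (1 : ℝ → ℝ) := by
    rw [cocompact_eq_atBot_atTop, sup_comm]
    exact (Asymptotics.IsBigO.of_bound C hfg).trans (hg.isBigO_one ℝ)
  obtain ⟨M, hM⟩ := isBounded_iff_forall_norm_le.1 (hf.isBounded_range_iff_isBigO.2 hO)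
  exact ⟨M, fun x => hM _ (mem_range_self x)⟩

lemma HasPolyGrowth.of_tendsto {g : ℝ → ℝ} (hg : Continuous g) {a : ℝ} (ha : 0 ≤ a)
    (h : Tendsto (fun x => |x| ^ (-a) * g x) (atTop ⊔ atBot) (𝓝 0)) : HasPolyGrowth g := by
  have hP : ∀ x : ℝ, 0 < (1 + |x|) ^ a := fun x => by positivity
  have hcont : Continuous fun x => g x / (1 + |x|) ^ a :=
    hg.div ((continuous_const.add continuous_abs).rpow_const fun x =>
      .inl (by positivity : (0 : ℝ) < 1 + |x|).ne') fun x => (hP x).ne'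
  obtain ⟨M, hM⟩ := exists_abs_le_of_eventually_abs_le (C := 1) hcont h <| by
    filter_upwards [tendsto_abs_atTop_sup_atBot.eventually_gt_atTop 0] with x hx
    rw [one_mul, abs_div, abs_mul, abs_of_pos (hP x),
      abs_of_pos (Real.rpow_pos_of_pos hx _), Real.rpow_neg hx.le, inv_mul_eq_div]
    exact div_le_div_of_nonneg_left (abs_nonneg _) (Real.rpow_pos_of_pos hx _)
      (Real.rpow_le_rpow hx.le (by linarith) ha)
  refine ⟨⌈a⌉₊, M, fun x => ?_⟩
  have hM0 : 0 ≤ M := (abs_nonneg _).trans (hM x)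
  have hgx : |g x| ≤ M * (1 + |x|) ^ a := by
    have := hM x
    rwa [abs_div, abs_of_pos (hP x), div_le_iff₀ (hP x)] at this
  calc |g x| ≤ M * (1 + |x|) ^ a := hgx
    _ ≤ M * (1 + |x|) ^ (⌈a⌉₊ : ℝ) := by
        gcongr
        · exact le_add_of_nonneg_right (abs_nonneg x)
        · exact Nat.le_ceil a
    _ = M * (1 + |x|) ^ ⌈a⌉₊ := by rw [Real.rpow_natCast]

lemma HasRapidDecay.of_tendsto {g : ℝ → ℝ} (hg : Continuous g)
    (h : ∀ m : ℝ, 0 < m → Tendsto (fun x => |x| ^ m * g x) (atTop ⊔ atBot) (𝓝 0)) :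
    HasRapidDecay g := by
  intro k
  have hk := h ((k + 1 : ℕ) : ℝ) (by positivity)
  simp only [Real.rpow_natCast] at hk
  obtain ⟨M, hM⟩ := exists_abs_le_of_eventually_abs_le (C := 2 ^ (k + 1))
    (f := fun x => (1 + |x|) ^ k * g x) (by fun_prop) hk <| by
    filter_upwards [tendsto_abs_atTop_sup_atBot.eventually_ge_atTop 1] with x hx
    rw [abs_mul, abs_mul, abs_of_pos (by positivity : (0:ℝ) < (1 + |x|) ^ k), abs_pow, abs_abs,
      ← mul_assoc, ← mul_pow]
    gcongr
    calc (1 + |x|) ^ k ≤ (1 + |x|) ^ (k + 1) := pow_le_pow_right₀ (by linarith) k.le_succ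
      _ ≤ (2 * |x|) ^ (k + 1) := by gcongr; linarith
  refine ⟨M, fun x => ?_⟩
  have := hM x
  rwa [abs_mul, abs_of_pos (by positivity : (0:ℝ) < (1 + |x|) ^ k)] at this

lemma HasPolyGrowth.of_abs_le_add {f g h : ℝ → ℝ} (hg : HasPolyGrowth g)
    (hh : HasPolyGrowth h) (hf : ∀ x, |f x| ≤ |g x| + |h x|) : HasPolyGrowth f := by
  obtain ⟨k, C, hC⟩ := hg
  obtain ⟨l, D, hD⟩ := hh
  refine ⟨max k l, |C| + |D|, fun x => ?_⟩
  have hx : 1 ≤ 1 + |x| := le_add_of_nonneg_right (abs_nonneg x)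
  calc |f x| ≤ C * (1 + |x|) ^ k + D * (1 + |x|) ^ l := (hf x).trans (add_le_add (hC x) (hD x))
    _ ≤ |C| * (1 + |x|) ^ max k l + |D| * (1 + |x|) ^ max k l :=
        add_le_add
          (mul_le_mul (le_abs_self C) (pow_le_pow_right₀ hx (le_max_left k l)) (by positivity)
            (abs_nonneg C))
          (mul_le_mul (le_abs_self D) (pow_le_pow_right₀ hx (le_max_right k l)) (by positivity)
            (abs_nonneg D))
    _ = (|C| + |D|) * (1 + |x|) ^ max k l := by ring

lemma HasRapidDecay.of_abs_le_add {f g h : ℝ → ℝ} (hg : HasRapidDecay g)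
    (hh : HasRapidDecay h) (hf : ∀ x, |f x| ≤ |g x| + |h x|) : HasRapidDecay f := by
  intro k
  obtain ⟨C, hC⟩ := hg k
  obtain ⟨D, hD⟩ := hh k
  refine ⟨C + D, fun x => ?_⟩
  calc (1 + |x|) ^ k * |f x| ≤ (1 + |x|) ^ k * (|g x| + |h x|) := by gcongr; exact hf x
    _ ≤ C + D := by rw [mul_add]; exact add_le_add (hC x) (hD x)

lemma HasPolyGrowth.of_hasDerivAt {g g' : ℝ → ℝ} (hg : ∀ x, HasDerivAt g (g' x) x)
    (hg' : HasPolyGrowth g') : HasPolyGrowth g := by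
  obtain ⟨k, C, hC⟩ := hg'
  refine ⟨k + 1, |g 0| + |C|, fun x => ?_⟩
  have hx : 1 ≤ 1 + |x| := le_add_of_nonneg_right (abs_nonneg x)
  have hbound : ∀ y ∈ uIcc 0 x, ‖g' y‖ ≤ |C| * (1 + |x|) ^ k := fun y hy => by
    have hy : |y| ≤ |x| := by simpa using abs_sub_left_of_mem_uIcc hy
    calc ‖g' y‖ ≤ C * (1 + |y|) ^ k := hC y
      _ ≤ |C| * (1 + |x|) ^ k := by gcongr; exact le_abs_self C
  have hmvt := (convex_uIcc 0 x).norm_image_sub_le_of_norm_deriv_le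
    (fun y _ => (hg y).differentiableAt) (fun y hy => (hg y).deriv ▸ hbound y hy)
    left_mem_uIcc right_mem_uIcc
  rw [Real.norm_eq_abs, Real.norm_eq_abs, sub_zero] at hmvt
  calc |g x| ≤ |g 0| + |C| * (1 + |x|) ^ k * |x| := by
        linarith [abs_sub_abs_le_abs_sub (g x) (g 0)]
    _ ≤ |g 0| * (1 + |x|) ^ (k + 1) + |C| * (1 + |x|) ^ (k + 1) := by
        refine add_le_add (le_mul_of_one_le_right (abs_nonneg _) (one_le_pow₀ hx)) ?_
        rw [pow_succ, ← mul_assoc]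
        gcongr
        linarith
    _ = (|g 0| + |C|) * (1 + |x|) ^ (k + 1) := by ring

lemma HasPolyGrowth.integrable_mul {f p : ℝ → ℝ} (hf : HasPolyGrowth f)
    (hp : HasRapidDecay p) (hm : AEStronglyMeasurable (fun x => f x * p x)) :
    Integrable (fun x => f x * p x) := by
  obtain ⟨k, C, hC⟩ := hf
  obtain ⟨D, hD⟩ := hp (k + 2)
  refine (integrable_inv_one_add_sq.const_mul (|C| * D)).mono' hm (.of_forall fun x => ?_)
  have hsq : 1 + x ^ 2 ≤ (1 + |x|) ^ 2 := by nlinarith [abs_nonneg x, sq_abs x]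
  rw [Real.norm_eq_abs, abs_mul]
  calc |f x| * |p x| ≤ |C| * ((1 + |x|) ^ k * |p x|) := by
        rw [← mul_assoc]; gcongr; exact (hC x).trans (by gcongr; exact le_abs_self C)
    _ = |C| * ((1 + |x|) ^ (k + 2) * |p x|) / (1 + |x|) ^ 2 := by
        field_simp; ring
    _ ≤ |C| * D / (1 + x ^ 2) := by
        have hDx := hD x
        have hD0 : 0 ≤ D := (mul_nonneg (by positivity) (abs_nonneg _)).trans hDx
        gcongr
    _ = |C| * D * (1 + x ^ 2)⁻¹ := div_eq_mul_inv _ _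

lemma memR1.hasPolyGrowth_comp {K : ℝ → ℝ → ℝ → ℝ} (hK : memR1 K)
    {g₀ g₁ : ℝ → ℝ} (h₀ : HasPolyGrowth g₀) (h₁ : HasPolyGrowth g₁) :
    HasPolyGrowth fun x => K x (g₀ x) (g₁ x) := by
  obtain ⟨-, C, r, hC, hr, hK⟩ := hK
  obtain ⟨k, A, hA⟩ : HasPolyGrowth fun x => 1 + |x| + (|g₀ x| + |g₁ x|) :=
    .of_abs_le_add (g := fun x => 1 + |x|)
      ⟨1, 1, fun x => by simp [abs_of_nonneg (by positivity : (0 : ℝ) ≤ 1 + |x|)]⟩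
      (.of_abs_le_add h₀ h₁ fun x => by rw [abs_of_nonneg (by positivity)])
      fun x => abs_add_le _ _
  refine ⟨k * (3 * ⌈r⌉₊), C * A ^ (3 * ⌈r⌉₊), fun x => ?_⟩
  set S := 1 + |x| + (|g₀ x| + |g₁ x|)
  have hS : 1 ≤ S := by
    simp only [S]; linarith [abs_nonneg x, abs_nonneg (g₀ x), abs_nonneg (g₁ x)]
  have hprod : (1 + |x|) * (1 + |g₀ x|) * (1 + |g₁ x|) ≤ S ^ 3 := by
    rw [pow_three, ← mul_assoc]
    gcongr <;> linarith [abs_nonneg x, abs_nonneg (g₀ x), abs_nonneg (g₁ x)]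
  have hK0 := hK 0 (Nat.zero_le _) x (g₀ x) (g₁ x)
  rw [norm_iteratedFDeriv_zero] at hK0
  calc |K x (g₀ x) (g₁ x)| ≤ C * ((1 + |x|) * (1 + |g₀ x|) * (1 + |g₁ x|)) ^ r := hK0
    _ ≤ C * (S ^ 3) ^ (⌈r⌉₊ : ℝ) := by
        gcongr
        exact (Real.rpow_le_rpow (by positivity) hprod hr.le).trans
          (Real.rpow_le_rpow_of_exponent_le (one_le_pow₀ hS) (Nat.le_ceil r))
    _ ≤ C * (A * (1 + |x|) ^ k) ^ (3 * ⌈r⌉₊) := by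
        rw [Real.rpow_natCast, ← pow_mul]
        gcongr
        exact (le_abs_self S).trans (hA x)
    _ = C * A ^ (3 * ⌈r⌉₊) * (1 + |x|) ^ (k * (3 * ⌈r⌉₊)) := by
        rw [mul_pow, ← pow_mul]; ring

lemma ContDiff.continuous_logDeriv {p : ℝ → ℝ} (hp : ContDiff ℝ 1 p)
    (hpos : ∀ x, p x ≠ 0) :
    Continuous (logDeriv p) :=
  (hp.continuous_deriv le_rfl).div hp.continuous hpos

lemma mix_pos {a b t : ℝ} (ha : 0 < a) (hb : 0 < b) (ht₀ : 0 ≤ t) (ht₁ : t ≤ 1) :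
    0 < t * a + (1 - t) * b :=
  convex_Ioi (0 : ℝ) ha hb ht₀ (sub_nonneg.2 ht₁) (add_sub_cancel t 1)

lemma mix_div_eq {a b s t : ℝ} (u v : ℝ) (ha : a ≠ 0) (hb : b ≠ 0)
    (hR : s * a + t * b ≠ 0) :
    (s * u + t * v) / (s * a + t * b)
      = s * a / (s * a + t * b) * (u / a) + t * b / (s * a + t * b) * (v / b) := by
  field_simp

lemma abs_mix_div_le {a b t : ℝ} (u v : ℝ) (ha : 0 < a) (hb : 0 < b) (ht₀ : 0 ≤ t)
    (ht₁ : t ≤ 1) :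
    |(t * u + (1 - t) * v) / (t * a + (1 - t) * b)| ≤ |u / a| + |v / b| := by
  have hR := mix_pos ha hb ht₀ ht₁
  have h1t := sub_nonneg.2 ht₁
  have hw₁ : 0 ≤ t * a / (t * a + (1 - t) * b) := by positivity
  have hw₂ : 0 ≤ (1 - t) * b / (t * a + (1 - t) * b) := by positivity
  have hwsum : t * a / (t * a + (1 - t) * b) + (1 - t) * b / (t * a + (1 - t) * b) = 1 := by
    rw [← add_div, div_self hR.ne']
  rw [mix_div_eq u v ha.ne' hb.ne' hR.ne']
  refine (abs_add_le _ _).trans (add_le_add ?_ ?_) <;> rw [abs_mul, abs_of_nonneg (by assumption)]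
  · exact mul_le_of_le_one_left (abs_nonneg _) (by linarith)
  · exact mul_le_of_le_one_left (abs_nonneg _) (by linarith)

lemma ConcaveOn.perspective_mix_le {f : ℝ → ℝ} (hf : ConcaveOn ℝ univ f) {a b t : ℝ}
    (ha : 0 < a) (hb : 0 < b) (ht₀ : 0 ≤ t) (ht₁ : t ≤ 1) (u v : ℝ) :
    t * (a * f (u / a)) + (1 - t) * (b * f (v / b))
      ≤ (t * a + (1 - t) * b) * f ((t * u + (1 - t) * v) / (t * a + (1 - t) * b)) := by
  have hR := mix_pos ha hb ht₀ ht₁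
  have h := hf.2 (mem_univ (u / a)) (mem_univ (v / b))
    (by have := sub_nonneg.2 ht₁; positivity : 0 ≤ t * a / (t * a + (1 - t) * b))
    (by have := sub_nonneg.2 ht₁; positivity : 0 ≤ (1 - t) * b / (t * a + (1 - t) * b))
    (by rw [← add_div, div_self hR.ne'])
  simp only [smul_eq_mul] at h
  rw [← mix_div_eq u v ha.ne' hb.ne' hR.ne'] at h
  calc t * (a * f (u / a)) + (1 - t) * (b * f (v / b))
      = (t * a + (1 - t) * b) * (t * a / (t * a + (1 - t) * b) * f (u / a)
          + (1 - t) * b / (t * a + (1 - t) * b) * f (v / b)) := by field_simp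
    _ ≤ _ := by gcongr

lemma StrictConcaveOn.perspective_mix_lt {f : ℝ → ℝ} (hf : StrictConcaveOn ℝ univ f)
    {a b t : ℝ} (ha : 0 < a) (hb : 0 < b) (ht₀ : 0 < t) (ht₁ : t < 1) {u v : ℝ}
    (huv : u / a ≠ v / b) :
    t * (a * f (u / a)) + (1 - t) * (b * f (v / b))
      < (t * a + (1 - t) * b) * f ((t * u + (1 - t) * v) / (t * a + (1 - t) * b)) := by
  have hR := mix_pos ha hb ht₀.le ht₁.le
  have h := hf.2 (mem_univ (u / a)) (mem_univ (v / b)) huv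
    (by have := sub_pos.2 ht₁; positivity : 0 < t * a / (t * a + (1 - t) * b))
    (by have := sub_pos.2 ht₁; positivity : 0 < (1 - t) * b / (t * a + (1 - t) * b))
    (by rw [← add_div, div_self hR.ne'])
  simp only [smul_eq_mul] at h
  rw [← mix_div_eq u v ha.ne' hb.ne' hR.ne'] at h
  calc t * (a * f (u / a)) + (1 - t) * (b * f (v / b))
      = (t * a + (1 - t) * b) * (t * a / (t * a + (1 - t) * b) * f (u / a)
          + (1 - t) * b / (t * a + (1 - t) * b) * f (v / b)) := by field_simp
    _ < _ := by gcongr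

noncomputable def phiIntegrand (c : ℝ) (K0 : ℝ → ℝ → ℝ) (x a u : ℝ) : ℝ :=
  c * (a * Real.log a) + a * K0 x (u / a)

section phiIntegrand

variable {c : ℝ} {K0 : ℝ → ℝ → ℝ} {x a b t : ℝ}

lemma phiIntegrand_mix_le (hc : c ≤ 0) (hK0 : ConcaveOn ℝ univ (K0 x)) (ha : 0 < a)
    (hb : 0 < b) (ht₀ : 0 ≤ t) (ht₁ : t ≤ 1) (u v : ℝ) :
    t * phiIntegrand c K0 x a u + (1 - t) * phiIntegrand c K0 x b v
      ≤ phiIntegrand c K0 x (t * a + (1 - t) * b) (t * u + (1 - t) * v) := by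
  have hent := Real.convexOn_mul_log.2 ha.le hb.le ht₀ (sub_nonneg.2 ht₁) (add_sub_cancel t 1)
  simp only [smul_eq_mul] at hent
  have hpersp := hK0.perspective_mix_le ha hb ht₀ ht₁ u v
  simp only [phiIntegrand]
  nlinarith [mul_le_mul_of_nonpos_left hent hc]

lemma phiIntegrand_mix_lt (hc : c ≤ 0) (hK0 : ConcaveOn ℝ univ (K0 x)) (ha : 0 < a)
    (hb : 0 < b) (ht₀ : 0 < t) (ht₁ : t < 1) {u v : ℝ}
    (hstrict : c < 0 ∧ a ≠ b ∨ StrictConcaveOn ℝ univ (K0 x) ∧ u / a ≠ v / b) :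
    t * phiIntegrand c K0 x a u + (1 - t) * phiIntegrand c K0 x b v
      < phiIntegrand c K0 x (t * a + (1 - t) * b) (t * u + (1 - t) * v) := by
  simp only [phiIntegrand]
  rcases hstrict with ⟨hc', hab⟩ | ⟨hK0', huv⟩
  · have hent := Real.strictConvexOn_mul_log.2 ha.le hb.le hab ht₀ (sub_pos.2 ht₁)
      (add_sub_cancel t 1)
    simp only [smul_eq_mul] at hent
    have hpersp := hK0.perspective_mix_le ha hb ht₀.le ht₁.le u v
    nlinarith [mul_lt_mul_of_neg_left hent hc']
  · have hent := Real.convexOn_mul_log.2 ha.le hb.le ht₀.le (sub_pos.2 ht₁).le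
      (add_sub_cancel t 1)
    simp only [smul_eq_mul] at hent
    have hpersp := hK0'.perspective_mix_lt ha hb ht₀ ht₁ huv
    nlinarith [mul_le_mul_of_nonpos_left hent hc]

end phiIntegrand

section integral

variable {f g h : ℝ → ℝ} {t : ℝ}

lemma integral_mix_le_of_forall_le (hf : Integrable f) (hg : Integrable g) (hh : Integrable h)
    (hle : ∀ x, t * f x + (1 - t) * g x ≤ h x) :
    t * (∫ x, f x) + (1 - t) * ∫ x, g x ≤ ∫ x, h x := by
  rw [← integral_const_mul, ← integral_const_mul,
    ← integral_add (hf.const_mul t) (hg.const_mul _)]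
  exact integral_mono ((hf.const_mul t).add (hg.const_mul _)) hh hle

lemma integral_mix_lt_of_forall_le_of_lt (hf : Integrable f) (hg : Integrable g)
    (hh : Integrable h) (hfc : Continuous f) (hgc : Continuous g) (hhc : Continuous h)
    (hle : ∀ x, t * f x + (1 - t) * g x ≤ h x) {x₀ : ℝ}
    (hlt : t * f x₀ + (1 - t) * g x₀ < h x₀) :
    t * (∫ x, f x) + (1 - t) * ∫ x, g x < ∫ x, h x := by
  have hmix : Integrable fun x => t * f x + (1 - t) * g x := (hf.const_mul t).add (hg.const_mul _)
  have hgap : 0 < ∫ x, (h x - (t * f x + (1 - t) * g x)) :=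
    integral_pos_of_integrable_nonneg_nonzero (x := x₀)
      (hhc.sub ((continuous_const.mul hfc).add (continuous_const.mul hgc))) (hh.sub hmix)
      (fun x => sub_nonneg.2 (hle x)) (sub_pos.2 hlt).ne'
  rw [integral_sub hh hmix, integral_add (hf.const_mul t) (hg.const_mul _), integral_const_mul,
    integral_const_mul] at hgap
  linarith

end integral

lemma ev1_eq_of_differentiableAt {K : ℝ → ℝ → ℝ → ℝ} {p : ℝ → ℝ} {x : ℝ}
    (hp : DifferentiableAt ℝ p x) (hpx : p x ≠ 0) :
    ev1 K p x = K x (Real.log (p x)) (logDeriv p x) := by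
  rw [ev1, ld, ld, iteratedDeriv_zero, iteratedDeriv_one, (hp.hasDerivAt.log hpx).deriv]
  rfl

lemma ev1_mul_eq_phiIntegrand {c : ℝ} {K0 : ℝ → ℝ → ℝ} {p : ℝ → ℝ} {x : ℝ}
    (hp : DifferentiableAt ℝ p x) (hpx : 0 < p x) :
    ev1 (fun x y0 y1 => c * y0 + K0 x y1) p x * p x = phiIntegrand c K0 x (p x) (deriv p x) := by
  rw [ev1_eq_of_differentiableAt hp hpx.ne', phiIntegrand, logDeriv_apply]
  ring

structure TameDensity (p : ℝ → ℝ) : Prop where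
  contDiff : ContDiff ℝ 1 p
  pos : ∀ x, 0 < p x
  hasPolyGrowth_logDeriv : HasPolyGrowth (logDeriv p)
  hasRapidDecay : HasRapidDecay p

namespace TameDensity

variable {c : ℝ} {K0 : ℝ → ℝ → ℝ} {p q : ℝ → ℝ} {t : ℝ}

lemma differentiable (hp : TameDensity p) : Differentiable ℝ p :=
  hp.contDiff.differentiable one_ne_zero

lemma hasDerivAt_log (hp : TameDensity p) (x : ℝ) :
    HasDerivAt (fun y => Real.log (p y)) (logDeriv p x) x :=
  (hp.differentiable x).hasDerivAt.log (hp.pos x).ne'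

lemma hasPolyGrowth_log (hp : TameDensity p) : HasPolyGrowth fun x => Real.log (p x) :=
  .of_hasDerivAt hp.hasDerivAt_log hp.hasPolyGrowth_logDeriv

lemma of_memP (hp : memP p) : TameDensity p := by
  obtain ⟨-, hpos, hsm, hP3, a, ha, hP4⟩ := hp
  have hsm1 : ContDiff ℝ 1 p := hsm.of_le (by norm_num)
  refine ⟨hsm1, hpos, .of_tendsto (hsm1.continuous_logDeriv fun x => (hpos x).ne') ha.le ?_,
    .of_tendsto hsm.continuous fun m hm => by simpa using hP3 m hm 0 (Nat.zero_le _)⟩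
  simpa only [iteratedDeriv_one, logDeriv_apply] using hP4 1 le_rfl (by norm_num)

lemma hasDerivAt_mix (hp : TameDensity p) (hq : TameDensity q) (t x : ℝ) :
    HasDerivAt (fun y => t * p y + (1 - t) * q y) (t * deriv p x + (1 - t) * deriv q x) x :=
  ((hp.differentiable x).hasDerivAt.const_mul t).add ((hq.differentiable x).hasDerivAt.const_mul _)

lemma mix (hp : TameDensity p) (hq : TameDensity q) (ht₀ : 0 ≤ t) (ht₁ : t ≤ 1) :
    TameDensity fun x => t * p x + (1 - t) * q x where
  contDiff := (contDiff_const.mul hp.contDiff).add (contDiff_const.mul hq.contDiff)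
  pos x := mix_pos (hp.pos x) (hq.pos x) ht₀ ht₁
  hasPolyGrowth_logDeriv := .of_abs_le_add hp.hasPolyGrowth_logDeriv hq.hasPolyGrowth_logDeriv
    fun x => by
      rw [logDeriv_apply, (hp.hasDerivAt_mix hq t x).deriv]
      exact abs_mix_div_le _ _ (hp.pos x) (hq.pos x) ht₀ ht₁
  hasRapidDecay := .of_abs_le_add hp.hasRapidDecay hq.hasRapidDecay fun x => by
    rw [abs_of_pos (mix_pos (hp.pos x) (hq.pos x) ht₀ ht₁), abs_of_pos (hp.pos x),
      abs_of_pos (hq.pos x)]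
    nlinarith [hp.pos x, hq.pos x]

lemma ev1_eq (hp : TameDensity p) (K : ℝ → ℝ → ℝ → ℝ) (x : ℝ) :
    ev1 K p x = K x (Real.log (p x)) (logDeriv p x) :=
  ev1_eq_of_differentiableAt (hp.differentiable x) (hp.pos x).ne'

lemma continuous_ev1_mul (hp : TameDensity p) {K : ℝ → ℝ → ℝ → ℝ}
    (hK : Continuous (uncurry3 K)) : Continuous fun x => ev1 K p x * p x := by
  simp only [hp.ev1_eq]
  have hlog : Continuous fun x => Real.log (p x) :=
    hp.contDiff.continuous.log fun x => (hp.pos x).ne'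
  exact (hK.comp (continuous_id.prodMk (hlog.prodMk
    (hp.contDiff.continuous_logDeriv fun x => (hp.pos x).ne')))).mul hp.contDiff.continuous

lemma integrable_ev1_mul (hp : TameDensity p) {K : ℝ → ℝ → ℝ → ℝ} (hK : memR1 K) :
    Integrable fun x => ev1 K p x * p x := by
  have hgrowth : HasPolyGrowth fun x => ev1 K p x := by
    simpa only [hp.ev1_eq] using
      hK.hasPolyGrowth_comp hp.hasPolyGrowth_log hp.hasPolyGrowth_logDeriv
  exact hgrowth.integrable_mul hp.hasRapidDecay
    (hp.continuous_ev1_mul hK.1.continuous).aestronglyMeasurable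

lemma ev1_mul_mix_eq (hp : TameDensity p) (hq : TameDensity q) (ht₀ : 0 ≤ t) (ht₁ : t ≤ 1)
    (x : ℝ) :
    ev1 (fun x y0 y1 => c * y0 + K0 x y1) (fun y => t * p y + (1 - t) * q y) x
        * (t * p x + (1 - t) * q x)
      = phiIntegrand c K0 x (t * p x + (1 - t) * q x) (t * deriv p x + (1 - t) * deriv q x) := by
  rw [← (hp.hasDerivAt_mix hq t x).deriv]
  exact ev1_mul_eq_phiIntegrand ((hp.mix hq ht₀ ht₁).differentiable x)
    (mix_pos (hp.pos x) (hq.pos x) ht₀ ht₁)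

lemma ev1_mul_mix_ge (hp : TameDensity p) (hq : TameDensity q) (hc : c ≤ 0)
    (hK0 : ∀ x, ConcaveOn ℝ univ (K0 x)) (ht₀ : 0 ≤ t) (ht₁ : t ≤ 1) (x : ℝ) :
    t * (ev1 (fun x y0 y1 => c * y0 + K0 x y1) p x * p x)
        + (1 - t) * (ev1 (fun x y0 y1 => c * y0 + K0 x y1) q x * q x)
      ≤ ev1 (fun x y0 y1 => c * y0 + K0 x y1) (fun y => t * p y + (1 - t) * q y) x
        * (t * p x + (1 - t) * q x) := by
  rw [ev1_mul_eq_phiIntegrand (hp.differentiable x) (hp.pos x),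
    ev1_mul_eq_phiIntegrand (hq.differentiable x) (hq.pos x), hp.ev1_mul_mix_eq hq ht₀ ht₁]
  exact phiIntegrand_mix_le hc (hK0 x) (hp.pos x) (hq.pos x) ht₀ ht₁ _ _

lemma ev1_mul_mix_gt (hp : TameDensity p) (hq : TameDensity q) (hc : c ≤ 0)
    (hK0 : ∀ x, ConcaveOn ℝ univ (K0 x)) (ht₀ : 0 < t) (ht₁ : t < 1) {x : ℝ}
    (hstrict : c < 0 ∧ p x ≠ q x ∨
      StrictConcaveOn ℝ univ (K0 x) ∧ logDeriv p x ≠ logDeriv q x) :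
    t * (ev1 (fun x y0 y1 => c * y0 + K0 x y1) p x * p x)
        + (1 - t) * (ev1 (fun x y0 y1 => c * y0 + K0 x y1) q x * q x)
      < ev1 (fun x y0 y1 => c * y0 + K0 x y1) (fun y => t * p y + (1 - t) * q y) x
        * (t * p x + (1 - t) * q x) := by
  rw [ev1_mul_eq_phiIntegrand (hp.differentiable x) (hp.pos x),
    ev1_mul_eq_phiIntegrand (hq.differentiable x) (hq.pos x),
    hp.ev1_mul_mix_eq hq ht₀.le ht₁.le]
  exact phiIntegrand_mix_lt hc (hK0 x) (hp.pos x) (hq.pos x) ht₀ ht₁ hstrict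

lemma eq_of_logDeriv_eq (hp : TameDensity p) (hq : TameDensity q) (hp₁ : ∫ x, p x = 1)
    (hq₁ : ∫ x, q x = 1) (h : logDeriv p = logDeriv q) : p = q := by
  have hconst : ∀ x, Real.log (p x) - Real.log (q x) = Real.log (p 0) - Real.log (q 0) :=
    fun x => is_const_of_deriv_eq_zero
      (fun y => ((hp.hasDerivAt_log y).sub (hq.hasDerivAt_log y)).differentiableAt)
      (fun y => by rw [((hp.hasDerivAt_log y).sub (hq.hasDerivAt_log y)).deriv, h, sub_self]) x 0
  set k := Real.log (p 0) - Real.log (q 0)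
  have hpq : ∀ x, p x = Real.exp k * q x := fun x => by
    rw [← hconst x, Real.exp_sub, Real.exp_log (hp.pos x), Real.exp_log (hq.pos x),
      div_mul_cancel₀ _ (hq.pos x).ne']
  have hk : Real.exp k = 1 :=
    calc Real.exp k = Real.exp k * ∫ x, q x := by rw [hq₁, mul_one]
      _ = ∫ x, p x := by
          rw [← integral_const_mul]
          exact integral_congr_ae (.of_forall fun x => (hpq x).symm)
      _ = 1 := hp₁
  funext x
  rw [hpq x, hk, one_mul]

end TameDensity

theorem statement5 (c : ℝ) (K0 : ℝ → ℝ → ℝ)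
    (hK : memR1 (fun x y0 y1 => c * y0 + K0 x y1))
    (hc : c ≤ 0)
    (hconc : ∀ x : ℝ, ConcaveOn ℝ Set.univ (K0 x)) :
    ConcaveOnP (PhiK1 (fun x y0 y1 => c * y0 + K0 x y1)) ∧
    ((c < 0 ∨ ∀ x : ℝ, StrictConcaveOn ℝ Set.univ (K0 x)) →
      StrictConcaveOnP (PhiK1 (fun x y0 y1 => c * y0 + K0 x y1))) := by
  refine ⟨fun p q hp hq t ht => ?_, fun hstrict p q hp hq hpq t ht => ?_⟩
  · have hp' := TameDensity.of_memP hp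
    have hq' := TameDensity.of_memP hq
    exact integral_mix_le_of_forall_le (hp'.integrable_ev1_mul hK) (hq'.integrable_ev1_mul hK)
      ((hp'.mix hq' ht.1 ht.2).integrable_ev1_mul hK) (hp'.ev1_mul_mix_ge hq' hc hconc ht.1 ht.2)
  · have hp' := TameDensity.of_memP hp
    have hq' := TameDensity.of_memP hq
    have hr' := hp'.mix hq' ht.1.le ht.2.le
    obtain ⟨x₀, hx₀⟩ : ∃ x₀, c < 0 ∧ p x₀ ≠ q x₀ ∨
        StrictConcaveOn ℝ univ (K0 x₀) ∧ logDeriv p x₀ ≠ logDeriv q x₀ := by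
      rcases hstrict with hc' | hK0
      · obtain ⟨x₀, hx₀⟩ := Function.ne_iff.1 hpq
        exact ⟨x₀, .inl ⟨hc', hx₀⟩⟩
      · obtain ⟨x₀, hx₀⟩ :=
          Function.ne_iff.1 (mt (hp'.eq_of_logDeriv_eq hq' hp.1 hq.1) hpq)
        exact ⟨x₀, .inr ⟨hK0 x₀, hx₀⟩⟩
    exact integral_mix_lt_of_forall_le_of_lt (hp'.integrable_ev1_mul hK)
      (hq'.integrable_ev1_mul hK) (hr'.integrable_ev1_mul hK)
      (hp'.continuous_ev1_mul hK.1.continuous) (hq'.continuous_ev1_mul hK.1.continuous)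
      (hr'.continuous_ev1_mul hK.1.continuous)
      (hp'.ev1_mul_mix_ge hq' hc hconc ht.1.le ht.2.le)
      (hp'.ev1_mul_mix_gt hq' hc hconc ht.1 ht.2 hx₀)
end

section
/- Let Φ : 𝒫 → ℝ be a concave functional (Φ(t·p + (1−t)·q) ≥ t·Φ(p) + (1−t)·Φ(q) for all p, q ∈ 𝒫, t ∈ [0,1]) admitting at each p ∈ 𝒫 a supergradient Φ*(·, p) : ℝ → ℝ, that is, a function with Φ*(·, p)·p and Φ*(·, p)·q integrable and Φ(q) − Φ(p) − ∫_ℝ Φ*(x, p)·(q(x) − p(x)) dx ≤ 0 for all q ∈ 𝒫. Then the scoring rule S(x, p) = Φ*(x, p) − ∫_ℝ Φ*(y, p) p(y) dy + Φ(p) is proper relative to 𝒫, and ∫_ℝ S(x, p) p(x) dx = Φ(p) for every p ∈ 𝒫. Conversely, if S is a scoring rule proper relative to 𝒫 with S(·, q)·p integrable for all p, q ∈ 𝒫, then the functional Φ(p) = ∫_ℝ S(x, p) p(x) dx is concave on 𝒫 and S(·, p) is a supergradient of Φ at every p ∈ 𝒫. These statements continue to hold with concave replaced by strictly concave and proper replaced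 by strictly proper. -/
/-
Propriety of `SG Φ Φs` is the supergradient inequality in disguise: the expected score of the
forecast `q` under `p` equals `Φ q + ∫ Φs(·, q) (p - q)`, which dominates `Φ p`, the expected score
of the truthful forecast. Conversely, for a proper `S` the affine map `q ↦ ∫ S(·, p) q` lies above
`q ↦ ∫ S(·, q) q` and touches it at `p`, so `S(·, p)` is a supergradient; and since the expected
score of a mixture is the mixture of the expected scores of the mixed forecast, propriety at the
mixture yields concavity. Strictness transfers in both directions; for `SG`, equality of expected
scores would make `Φ` affine between `q` and `p`, contradicting strict concavity at the midpoint.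
All of this needs `𝒫` to be closed under mixtures; the one estimate there is
`|t u + (1 - t) v| / (t a + (1 - t) b) ≤ |u| / a + |v| / b`, which bounds the log-derivatives
of a mixture by those of its components.
-/

open MeasureTheory Filter Set

noncomputable section

/-- `Φs` is a supergradient of `Φ` at every `p ∈ 𝒫` (with the required integrabilities). -/
def Supergradient (Φ : (ℝ → ℝ) → ℝ) (Φs : ℝ → (ℝ → ℝ) → ℝ) : Prop :=
  ∀ p q : ℝ → ℝ, memP p → memP q →
    Integrable (fun x => Φs x p * p x) ∧
    Integrable (fun x => Φs x p * q x) ∧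
    Φ q - Φ p - (∫ x, Φs x p * (q x - p x)) ≤ 0

/-- The scoring rule built from a functional and its supergradient. -/
def SG (Φ : (ℝ → ℝ) → ℝ) (Φs : ℝ → (ℝ → ℝ) → ℝ) (x : ℝ) (p : ℝ → ℝ) : ℝ :=
  Φs x p - (∫ y, Φs y p * p y) + Φ p

lemma iteratedDeriv_const_mul_add_const_mul {𝕜 : Type*} [NontriviallyNormedField 𝕜]
    {n : ℕ} {f g : 𝕜 → 𝕜} {x : 𝕜} (hf : ContDiffAt 𝕜 n f x) (hg : ContDiffAt 𝕜 n g x)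
    (a b : 𝕜) :
    iteratedDeriv n (fun y => a * f y + b * g y) x
      = a * iteratedDeriv n f x + b * iteratedDeriv n g x := by
  rw [iteratedDeriv_fun_add (contDiffAt_const.mul hf) (contDiffAt_const.mul hg),
    iteratedDeriv_const_mul_field, iteratedDeriv_const_mul_field]

lemma convexCombo_pos {t a b : ℝ} (ht0 : 0 ≤ t) (ht1 : t ≤ 1) (ha : 0 < a) (hb : 0 < b) :
    0 < t * a + (1 - t) * b :=
  convex_Ioi (0 : ℝ) ha hb ht0 (sub_nonneg.2 ht1) (by ring)

lemma abs_convexCombo_div_convexCombo_le {t u v a b : ℝ} (ht0 : 0 ≤ t) (ht1 : t ≤ 1)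
    (ha : 0 < a) (hb : 0 < b) :
    |t * u + (1 - t) * v| / (t * a + (1 - t) * b) ≤ |u| / a + |v| / b := by
  have hD := convexCombo_pos ht0 ht1 ha hb
  have hta : t * a ≤ t * a + (1 - t) * b := by nlinarith
  have htb : (1 - t) * b ≤ t * a + (1 - t) * b := by nlinarith
  rw [div_le_iff₀ hD]
  calc |t * u + (1 - t) * v| ≤ t * |u| + (1 - t) * |v| := by
        simpa [abs_mul, abs_of_nonneg ht0, abs_of_nonneg (sub_nonneg.2 ht1)]
          using abs_add_le (t * u) ((1 - t) * v)
    _ = t * a * (|u| / a) + (1 - t) * b * (|v| / b) := by field_simp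
    _ ≤ (t * a + (1 - t) * b) * (|u| / a) + (t * a + (1 - t) * b) * (|v| / b) := by
        gcongr
    _ = (|u| / a + |v| / b) * (t * a + (1 - t) * b) := by ring

lemma tendsto_rpow_neg_mul_convexCombo_div {p q P Q : ℝ → ℝ} {t a b : ℝ}
    (ht0 : 0 ≤ t) (ht1 : t ≤ 1) (hp : ∀ x, 0 < p x) (hq : ∀ x, 0 < q x)
    (hP : Tendsto (fun x => |x| ^ (-a) * (P x / p x)) (atTop ⊔ atBot) (nhds 0))
    (hQ : Tendsto (fun x => |x| ^ (-b) * (Q x / q x)) (atTop ⊔ atBot) (nhds 0)) :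
    Tendsto (fun x => |x| ^ (-max a b) * ((t * P x + (1 - t) * Q x) / (t * p x + (1 - t) * q x)))
      (atTop ⊔ atBot) (nhds 0) := by
  have hbound := (hP.abs.add hQ.abs).congr fun x => by
    rw [abs_mul, abs_mul, abs_of_nonneg (Real.rpow_nonneg (abs_nonneg x) _),
      abs_of_nonneg (Real.rpow_nonneg (abs_nonneg x) _)]
  rw [abs_zero, add_zero] at hbound
  refine squeeze_zero_norm' ?_ hbound
  have hfar : ∀ᶠ x : ℝ in atTop ⊔ atBot, 1 ≤ |x| :=
    (tendsto_abs_atTop_atTop.sup tendsto_abs_atBot_atTop).eventually_ge_atTop 1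
  filter_upwards [hfar] with x hx
  have hpow_a : |x| ^ (-max a b) ≤ |x| ^ (-a) :=
    Real.rpow_le_rpow_of_exponent_le hx (neg_le_neg (le_max_left a b))
  have hpow_b : |x| ^ (-max a b) ≤ |x| ^ (-b) :=
    Real.rpow_le_rpow_of_exponent_le hx (neg_le_neg (le_max_right a b))
  have hpow : 0 ≤ |x| ^ (-max a b) := Real.rpow_nonneg (abs_nonneg x) _
  rw [Real.norm_eq_abs, abs_mul, abs_of_nonneg hpow, abs_div, abs_div, abs_div,
    abs_of_pos (convexCombo_pos ht0 ht1 (hp x) (hq x)), abs_of_pos (hp x), abs_of_pos (hq x)]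
  calc |x| ^ (-max a b) * (|t * P x + (1 - t) * Q x| / (t * p x + (1 - t) * q x))
      ≤ |x| ^ (-max a b) * (|P x| / p x + |Q x| / q x) :=
        mul_le_mul_of_nonneg_left (abs_convexCombo_div_convexCombo_le ht0 ht1 (hp x) (hq x)) hpow
    _ ≤ |x| ^ (-a) * (|P x| / p x) + |x| ^ (-b) * (|Q x| / q x) := by
        have := div_nonneg (abs_nonneg (P x)) (hp x).le
        have := div_nonneg (abs_nonneg (Q x)) (hq x).le
        nlinarith

lemma memP.convexCombo {p q : ℝ → ℝ} (hp : memP p) (hq : memP q) {t : ℝ}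
    (ht0 : 0 ≤ t) (ht1 : t ≤ 1) : memP (fun x => t * p x + (1 - t) * q x) := by
  obtain ⟨hp_int, hp_pos, hp_smooth, hp_decay, ap, hap, hp_log⟩ := hp
  obtain ⟨hq_int, hq_pos, hq_smooth, hq_decay, aq, -, hq_log⟩ := hq
  have hderiv : ∀ j ≤ 4, ∀ x, iteratedDeriv j (fun x => t * p x + (1 - t) * q x) x
      = t * iteratedDeriv j p x + (1 - t) * iteratedDeriv j q x := fun j hj x =>
    iteratedDeriv_const_mul_add_const_mul (hp_smooth.of_le (by exact_mod_cast hj)).contDiffAt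
      (hq_smooth.of_le (by exact_mod_cast hj)).contDiffAt t (1 - t)
  refine ⟨?_, fun x => convexCombo_pos ht0 ht1 (hp_pos x) (hq_pos x),
    (contDiff_const.mul hp_smooth).add (contDiff_const.mul hq_smooth), fun m hm j hj => ?_,
    max ap aq, lt_max_of_lt_left hap, fun j hj1 hj4 => ?_⟩
  · rw [integral_add ((integrable_of_integral_eq_one hp_int).const_mul t)
      ((integrable_of_integral_eq_one hq_int).const_mul (1 - t)),
      integral_const_mul, integral_const_mul, hp_int, hq_int]
    ring
  · have hmix := ((hp_decay m hm j hj).const_mul t).add ((hq_decay m hm j hj).const_mul (1 - t))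
    rw [mul_zero, mul_zero, add_zero] at hmix
    exact hmix.congr fun x => by rw [hderiv j hj x]; ring
  · simpa only [hderiv j hj4] using
      tendsto_rpow_neg_mul_convexCombo_div ht0 ht1 hp_pos hq_pos (hp_log j hj1 hj4)
        (hq_log j hj1 hj4)

lemma convexCombo_ne_left {p q : ℝ → ℝ} (hpq : p ≠ q) {t : ℝ} (ht : t ≠ 1) :
    (fun x => t * p x + (1 - t) * q x) ≠ p := by
  refine fun h => hpq (funext fun x => ?_)
  have hx : (1 - t) * (q x - p x) = 0 := by linear_combination congrFun h x
  linarith [(mul_eq_zero.1 hx).resolve_left (sub_ne_zero.2 (Ne.symm ht))]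

lemma convexCombo_ne_right {p q : ℝ → ℝ} (hpq : p ≠ q) {t : ℝ} (ht : t ≠ 0) :
    (fun x => t * p x + (1 - t) * q x) ≠ q := by
  refine fun h => hpq (funext fun x => ?_)
  have hx : t * (p x - q x) = 0 := by linear_combination congrFun h x
  linarith [(mul_eq_zero.1 hx).resolve_left ht]

lemma integral_mul_convexCombo {f p q : ℝ → ℝ} (hfp : Integrable (fun x => f x * p x))
    (hfq : Integrable (fun x => f x * q x)) (t : ℝ) :
    ∫ x, f x * (t * p x + (1 - t) * q x)
      = t * (∫ x, f x * p x) + (1 - t) * ∫ x, f x * q x := by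
  simp_rw [mul_add, mul_left_comm (f _)]
  rw [integral_add (hfp.const_mul t) (hfq.const_mul (1 - t)), integral_const_mul,
    integral_const_mul]

lemma integral_mul_sub {f p q : ℝ → ℝ} (hfp : Integrable (fun x => f x * p x))
    (hfq : Integrable (fun x => f x * q x)) :
    ∫ x, f x * (p x - q x) = (∫ x, f x * p x) - ∫ x, f x * q x := by
  simp_rw [mul_sub]
  exact integral_sub hfp hfq

lemma integral_SG_mul (Φ : (ℝ → ℝ) → ℝ) (Φs : ℝ → (ℝ → ℝ) → ℝ) {p q : ℝ → ℝ}
    (hqp : Integrable (fun x => Φs x q * p x)) (hp : (∫ x, p x) = 1) :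
    ∫ x, SG Φ Φs x q * p x = Φ q + ((∫ x, Φs x q * p x) - ∫ x, Φs x q * q x) := by
  have hp_int := integrable_of_integral_eq_one hp
  have hsplit : (fun x => SG Φ Φs x q * p x)
      = fun x => Φs x q * p x + (Φ q - ∫ y, Φs y q * q y) * p x :=
    funext fun x => by rw [SG]; ring
  rw [hsplit, integral_add hqp (hp_int.const_mul _), integral_const_mul, hp]
  ring

namespace Supergradient

variable {Φ : (ℝ → ℝ) → ℝ} {Φs : ℝ → (ℝ → ℝ) → ℝ} {p q : ℝ → ℝ}

lemma integral_SG_self (h : Supergradient Φ Φs) (hp : memP p) :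
    ∫ x, SG Φ Φs x p * p x = Φ p := by
  rw [integral_SG_mul Φ Φs (h p p hp hp).1 hp.1, sub_self, add_zero]

lemma le_integral_SG (h : Supergradient Φ Φs) (hp : memP p) (hq : memP q) :
    Φ p ≤ ∫ x, SG Φ Φs x q * p x := by
  obtain ⟨hqq, hqp, hineq⟩ := h q p hq hp
  rw [integral_SG_mul Φ Φs hqp hp.1, ← integral_mul_sub hqp hqq]
  linarith

lemma proper (h : Supergradient Φ Φs) : Proper (SG Φ Φs) := fun p q hp hq => by
  rw [h.integral_SG_self hp]
  exact h.le_integral_SG hp hq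

lemma eq_of_integral_SG_eq (hΦ : StrictConcaveOnP Φ) (h : Supergradient Φ Φs) (hp : memP p)
    (hq : memP q) (heq : ∫ x, SG Φ Φs x p * p x = ∫ x, SG Φ Φs x q * p x) : q = p := by
  by_contra hne
  have hstrict := hΦ p q hp hq (Ne.symm hne) (1 / 2) (by norm_num)
  set m := fun x => (1 / 2 : ℝ) * p x + (1 - 1 / 2) * q x
  obtain ⟨hqq, hqp, -⟩ := h q p hq hp
  obtain ⟨-, -, hineq⟩ := h q m hq (hp.convexCombo hq (by norm_num) (by norm_num))
  have hshift : ∫ x, Φs x q * (m x - q x)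
      = 1 / 2 * ((∫ x, Φs x q * p x) - ∫ x, Φs x q * q x) := by
    rw [← integral_mul_sub hqp hqq, ← integral_const_mul]
    congr 1 with x
    ring
  rw [h.integral_SG_self hp, integral_SG_mul Φ Φs hqp hp.1] at heq
  -- the supergradient bound at `q` puts `Φ m` on the chord from `Φ q` to `Φ p`
  linarith

lemma strictlyProper (hΦ : StrictConcaveOnP Φ) (h : Supergradient Φ Φs) :
    StrictlyProper (SG Φ Φs) := by
  intro p q hp hq
  exact ⟨h.proper p q hp hq, h.eq_of_integral_SG_eq hΦ hp hq⟩

end Supergradient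

section

variable {S : ℝ → (ℝ → ℝ) → ℝ}

lemma StrictlyProper.proper (hS : StrictlyProper S) : Proper S := fun p q hp hq =>
  (hS p q hp hq).1

lemma Proper.supergradient
    (hInt : ∀ p q : ℝ → ℝ, memP p → memP q → Integrable (fun x => S x q * p x))
    (hS : Proper S) : Supergradient (fun p => ∫ x, S x p * p x) S := fun p q hp hq =>
  ⟨hInt p p hp hp, hInt q p hq hp, by
    dsimp only
    rw [integral_mul_sub (hInt q p hq hp) (hInt p p hp hp)]
    linarith [hS q p hq hp]⟩

lemma Proper.concaveOnP
    (hInt : ∀ p q : ℝ → ℝ, memP p → memP q → Integrable (fun x => S x q * p x))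
    (hS : Proper S) : ConcaveOnP (fun p => ∫ x, S x p * p x) := by
  rintro p q hp hq t ⟨ht0, ht1⟩
  have hm := hp.convexCombo hq ht0 ht1
  dsimp only
  rw [integral_mul_convexCombo (hInt p _ hp hm) (hInt q _ hq hm)]
  have := mul_le_mul_of_nonneg_left (hS p _ hp hm) ht0
  have := mul_le_mul_of_nonneg_left (hS q _ hq hm) (sub_nonneg.2 ht1)
  linarith

lemma StrictlyProper.strictConcaveOnP
    (hInt : ∀ p q : ℝ → ℝ, memP p → memP q → Integrable (fun x => S x q * p x))
    (hS : StrictlyProper S) : StrictConcaveOnP (fun p => ∫ x, S x p * p x) := by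
  rintro p q hp hq hpq t ⟨ht0, ht1⟩
  have hm := hp.convexCombo hq ht0.le ht1.le
  have hlt : ∀ r, memP r → r ≠ (fun x => t * p x + (1 - t) * q x) →
      ∫ x, S x r * r x < ∫ x, S x (fun y => t * p y + (1 - t) * q y) * r x := fun r hr hne =>
    (hS r _ hr hm).1.lt_of_ne fun h => hne ((hS r _ hr hm).2 h).symm
  dsimp only
  rw [integral_mul_convexCombo (hInt p _ hp hm) (hInt q _ hq hm)]
  have := mul_lt_mul_of_pos_left (hlt p hp (convexCombo_ne_left hpq ht1.ne).symm) ht0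
  have := mul_lt_mul_of_pos_left (hlt q hq (convexCombo_ne_right hpq ht0.ne').symm)
    (sub_pos.2 ht1)
  linarith

end

theorem statement6 :
    (∀ (Φ : (ℝ → ℝ) → ℝ) (Φs : ℝ → (ℝ → ℝ) → ℝ),
      ConcaveOnP Φ → Supergradient Φ Φs →
        Proper (SG Φ Φs) ∧ ∀ p, memP p → (∫ x, SG Φ Φs x p * p x) = Φ p) ∧
    (∀ S : ℝ → (ℝ → ℝ) → ℝ,
      (∀ p q : ℝ → ℝ, memP p → memP q → Integrable (fun x => S x q * p x)) →
      Proper S →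
        ConcaveOnP (fun p => ∫ x, S x p * p x) ∧
        Supergradient (fun p => ∫ x, S x p * p x) S) ∧
    (∀ (Φ : (ℝ → ℝ) → ℝ) (Φs : ℝ → (ℝ → ℝ) → ℝ),
      StrictConcaveOnP Φ → Supergradient Φ Φs →
        StrictlyProper (SG Φ Φs) ∧ ∀ p, memP p → (∫ x, SG Φ Φs x p * p x) = Φ p) ∧
    (∀ S : ℝ → (ℝ → ℝ) → ℝ,
      (∀ p q : ℝ → ℝ, memP p → memP q → Integrable (fun x => S x q * p x)) →
      StrictlyProper S →
        StrictConcaveOnP (fun p => ∫ x, S x p * p x) ∧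
        Supergradient (fun p => ∫ x, S x p * p x) S) :=
  ⟨fun _ _ _ h => ⟨h.proper, fun _ hp => h.integral_SG_self hp⟩,
    fun _ hInt hS => ⟨Proper.concaveOnP hInt hS, Proper.supergradient hInt hS⟩,
    fun _ _ hΦ h => ⟨h.strictlyProper hΦ, fun _ hp => h.integral_SG_self hp⟩,
    fun _ hInt hS => ⟨StrictlyProper.strictConcaveOnP hInt hS,
      Proper.supergradient hInt (StrictlyProper.proper hS)⟩⟩

end
end

section
/- Let k ∈ {0, 1, 2, 3, 4}. For every x ∈ ℝ and every vector y = (y_0, …, y_k) ∈ ℝ^{k+1} there exists a density q ∈ 𝒫 such that (ln q)(x) = y_0, (ln q)'(x) = y_1, …, (ln q)^{(k)}(x) = y_k. -/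
open MeasureTheory Filter Set

/-!
Take the Taylor polynomial `p` of the prescribed jet at `x` and bend it down to
`Q = p(t - x) - c (t - x)^(2k+2)`, which has the same `k`-jet at `x`. For large `c`, `exp ∘ Q` is
dominated by a Gaussian and, by dominated convergence, has mass `< 1`. The missing mass is
supplied by a smooth bump supported away from `x`, so `log q = Q` near `x`. Outside the bump,
`q = exp ∘ Q`, whose derivatives are polynomials times `exp ∘ Q`: this gives the rapid decay
of `q^(j)` and the polynomial growth of `q^(j) / q`.
-/

open Polynomial Asymptotics Topology Bornology Real
open scoped ContDiff Nat

lemma isBigO_abs_rpow_mul {f g : ℝ → ℝ} {r s : ℝ} (hf : f =O[cobounded ℝ] (|·| ^ r))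
    (hg : g =O[cobounded ℝ] (|·| ^ s)) :
    (fun t => f t * g t) =O[cobounded ℝ] (|·| ^ (r + s)) := by
  refine (hf.mul hg).congr' EventuallyEq.rfl ?_
  filter_upwards [tendsto_norm_cobounded_atTop.eventually_gt_atTop 0] with t ht
  exact (rpow_add ht r s).symm

lemma tendsto_zero_of_isBigO_abs_rpow {f : ℝ → ℝ} {s : ℝ} (hf : f =O[cobounded ℝ] (|·| ^ s))
    (hs : s < 0) : Tendsto f (cobounded ℝ) (𝓝 0) := by
  refine hf.trans_tendsto ?_
  simpa [Function.comp_def] using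
    (tendsto_rpow_neg_atTop (neg_pos.2 hs)).comp (tendsto_norm_cobounded_atTop (E := ℝ))

lemma Polynomial.isBigO_eval_abs_rpow_natDegree (R : ℝ[X]) :
    (fun t => R.eval t) =O[cobounded ℝ] (|·| ^ (R.natDegree : ℝ)) := by
  refine isEquivalent_cobounded_leading_monomial.isBigO.trans ?_
  refine ((isBigO_refl (fun t : ℝ => t ^ R.natDegree) _).const_mul_left _).norm_right.congr_right
    fun t => ?_
  simp

lemma integrable_exp_sub_sq (B a : ℝ) : Integrable fun t => exp (B - (t - a) ^ 2) := by
  refine (((integrable_exp_neg_mul_sq one_pos).comp_sub_right a).const_mul (exp B)).congr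
    (.of_forall fun t => ?_)
  simp only [← exp_add]
  ring_nf

lemma isBigO_exp_sub_sq_abs_rpow (B a s : ℝ) :
    (fun t => exp (B - (t - a) ^ 2)) =O[cobounded ℝ] (|·| ^ s) := by
  have h := (cexp_neg_quadratic_isLittleO_abs_rpow_cocompact (a := -1) (by simp) (2 * a) s)
    |>.norm_left.isBigO
  rw [← Metric.cobounded_eq_cocompact] at h
  refine (h.const_mul_left (exp (B - a ^ 2))).congr_left fun t => ?_
  simp only [Complex.norm_exp, ← exp_add]
  congr 1
  simp [← Complex.ofReal_pow]
  ring

lemma Polynomial.iteratedDeriv_eval (p : ℝ[X]) (j : ℕ) :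
    iteratedDeriv j (fun t => p.eval t) = fun t => (derivative^[j] p).eval t := by
  induction j generalizing p with
  | zero => simp
  | succ j ih =>
    have hderiv : deriv (fun t => p.eval t) = fun t => p.derivative.eval t := by
      ext t; exact p.deriv
    rw [iteratedDeriv_succ', hderiv, ih, Function.iterate_succ_apply]

lemma Polynomial.iteratedDeriv_eval_comp_X_sub_C_self (p : ℝ[X]) (x : ℝ) (j : ℕ) :
    iteratedDeriv j (fun t => (p.comp (X - C x)).eval t) x = j ! * p.coeff j := by
  simp only [eval_comp, eval_sub, eval_X, eval_C]
  rw [iteratedDeriv_comp_sub_const j (fun u => p.eval u) x, p.iteratedDeriv_eval]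
  beta_reduce
  rw [sub_self, ← coeff_zero_eq_eval_zero, coeff_iterate_derivative, zero_add,
    Nat.descFactorial_self, nsmul_eq_mul]

lemma Polynomial.exists_iteratedDeriv_exp_eval (Q : ℝ[X]) (j : ℕ) :
    ∃ R : ℝ[X], R.natDegree ≤ j * Q.natDegree ∧
      iteratedDeriv j (fun t => exp (Q.eval t)) = fun t => R.eval t * exp (Q.eval t) := by
  induction j with
  | zero => exact ⟨1, by simp, by simp⟩
  | succ j ih =>
    obtain ⟨R, hdeg, hR⟩ := ih
    refine ⟨derivative R + R * derivative Q, ?_, ?_⟩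
    · have hR' := natDegree_derivative_le R
      have hQ' := natDegree_derivative_le Q
      have hRQ' := natDegree_mul_le (p := R) (q := derivative Q)
      refine (natDegree_add_le _ _).trans (max_le ?_ ?_) <;> rw [Nat.succ_mul] <;> omega
    · rw [iteratedDeriv_succ, hR]
      funext t
      rw [((R.hasDerivAt t).fun_mul (Q.hasDerivAt t).exp).deriv]
      simp only [eval_add, eval_mul]
      ring

lemma add_eventuallyEq_of_notMem_tsupport {f g : ℝ → ℝ} {x : ℝ} (hx : x ∉ tsupport g) :
    (fun t => f t + g t) =ᶠ[𝓝 x] f := by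
  filter_upwards [notMem_tsupport_iff_eventuallyEq.1 hx] with t ht
  simp [ht]

lemma log_exp_add_eventuallyEq_of_notMem_tsupport {f g : ℝ → ℝ} {x : ℝ} (hx : x ∉ tsupport g) :
    (fun t => log (exp (f t) + g t)) =ᶠ[𝓝 x] f := by
  filter_upwards [add_eventuallyEq_of_notMem_tsupport (f := fun t => exp (f t)) hx] with t ht
  rw [ht, log_exp]

lemma iteratedDeriv_add_eventuallyEq_cobounded {f g : ℝ → ℝ} (hg : HasCompactSupport g) (j : ℕ) :
    iteratedDeriv j (fun t => f t + g t) =ᶠ[cobounded ℝ] iteratedDeriv j f := by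
  rw [Metric.cobounded_eq_cocompact]
  filter_upwards [hg.isCompact.compl_mem_cocompact] with t ht
  exact (add_eventuallyEq_of_notMem_tsupport ht).iteratedDeriv_eq j

lemma isBigO_eval_mul_exp_eval {Q : ℝ[X]} {B a : ℝ} (hQ : ∀ t, Q.eval t ≤ B - (t - a) ^ 2)
    (R : ℝ[X]) (s : ℝ) :
    (fun t => R.eval t * exp (Q.eval t)) =O[cobounded ℝ] (|·| ^ s) := by
  have hexp : (fun t => exp (Q.eval t)) =O[cobounded ℝ] (|·| ^ (s - R.natDegree)) := by
    refine (IsBigO.of_bound' (.of_forall fun t => ?_)).trans (isBigO_exp_sub_sq_abs_rpow B a _)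
    simp only [norm_eq_abs, abs_exp, exp_le_exp, hQ]
  simpa using isBigO_abs_rpow_mul R.isBigO_eval_abs_rpow_natDegree hexp

theorem memP_exp_eval_add {Q : ℝ[X]} {B a : ℝ} (hQ : ∀ t, Q.eval t ≤ B - (t - a) ^ 2)
    {g : ℝ → ℝ} (hg : ContDiff ℝ 4 g) (hg0 : ∀ t, 0 ≤ g t) (hgc : HasCompactSupport g)
    (hint : (∫ t, exp (Q.eval t)) + ∫ t, g t = 1) :
    memP fun t => exp (Q.eval t) + g t := by
  have hexp : Continuous fun t => exp (Q.eval t) := continuous_exp.comp Q.continuous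
  choose R hRdeg hR using Q.exists_iteratedDeriv_exp_eval
  have hderiv (j : ℕ) : iteratedDeriv j (fun t => exp (Q.eval t) + g t) =ᶠ[cobounded ℝ]
      fun t => (R j).eval t * exp (Q.eval t) :=
    (iteratedDeriv_add_eventuallyEq_cobounded hgc j).trans (.of_eq (hR j))
  have hfilter : atTop ⊔ atBot = cobounded ℝ := by rw [IsOrderBornology.cobounded_eq, sup_comm]
  refine ⟨?_, fun t => add_pos_of_pos_of_nonneg (exp_pos _) (hg0 t), ?_, ?_, ?_⟩
  · have hexp_int : Integrable fun t => exp (Q.eval t) :=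
      (integrable_exp_sub_sq B a).mono' hexp.aestronglyMeasurable
        (.of_forall fun t => by simpa using hQ t)
    rwa [integral_add hexp_int (hg.continuous.integrable_of_hasCompactSupport hgc)]
  · have hQ4 : ContDiff ℝ 4 fun t => Q.eval t := by
      simpa [coe_aeval_eq_eval] using Q.contDiff_aeval (𝕜 := ℝ) 4
    exact (contDiff_exp.comp hQ4).add hg
  · intro m _ j _
    rw [hfilter]
    have hj : iteratedDeriv j (fun t => exp (Q.eval t) + g t) =O[cobounded ℝ]
        (|·| ^ (-(m + 1))) :=
      (isBigO_eval_mul_exp_eval hQ (R j) _).congr' (hderiv j).symm .rfl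
    exact tendsto_zero_of_isBigO_abs_rpow (isBigO_abs_rpow_mul (isBigO_refl _ _) hj)
      (by linarith)
  · refine ⟨4 * Q.natDegree + 1, by positivity, fun j _ hj4 => ?_⟩
    rw [hfilter]
    have hratio : (fun t => iteratedDeriv j (fun u => exp (Q.eval u) + g u) t /
        (exp (Q.eval t) + g t)) =ᶠ[cobounded ℝ] fun t => (R j).eval t := by
      filter_upwards [hderiv j, iteratedDeriv_add_eventuallyEq_cobounded hgc 0] with t hj h0
      simp only [iteratedDeriv_zero] at h0
      rw [hj, h0, mul_div_cancel_right₀ _ (exp_ne_zero _)]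
    refine tendsto_zero_of_isBigO_abs_rpow (isBigO_abs_rpow_mul (isBigO_refl _ _)
      ((R j).isBigO_eval_abs_rpow_natDegree.congr' hratio.symm .rfl)) ?_
    have : ((R j).natDegree : ℝ) ≤ 4 * Q.natDegree := by
      exact_mod_cast (hRdeg j).trans (Nat.mul_le_mul_right _ hj4)
    linarith

lemma abs_pow_le_one_add_pow_two_mul (u : ℝ) {i m : ℕ} (hi : i ≤ 2 * m) :
    |u| ^ i ≤ 1 + u ^ (2 * m) := by
  have heven : u ^ (2 * m) = |u| ^ (2 * m) := ((even_two_mul m).pow_abs u).symm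
  rcases le_total |u| 1 with hu | hu
  · linarith [pow_le_one₀ (abs_nonneg u) hu (n := i), pow_nonneg (abs_nonneg u) (2 * m)]
  · linarith [pow_le_pow_right₀ hu hi]

lemma Polynomial.exists_eval_sub_mul_pow_le (p : ℝ[X]) {m : ℕ} (hm : 1 ≤ m)
    (hp : p.natDegree ≤ 2 * m) : ∃ c₀ B : ℝ, ∀ u, p.eval u - c₀ * u ^ (2 * m) ≤ B - u ^ 2 := by
  set S := ∑ i ∈ Finset.range (p.natDegree + 1), |p.coeff i|
  have hS : ∀ u, |p.eval u| ≤ S * (1 + u ^ (2 * m)) := fun u => by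
    rw [eval_eq_sum_range, Finset.sum_mul]
    refine (Finset.abs_sum_le_sum_abs _ _).trans (Finset.sum_le_sum fun i hi => ?_)
    rw [abs_mul, abs_pow]
    have hi : i ≤ 2 * m := (Finset.mem_range_succ_iff.1 hi).trans hp
    exact mul_le_mul_of_nonneg_left (abs_pow_le_one_add_pow_two_mul u hi) (abs_nonneg _)
  refine ⟨S + 1, S + 1, fun u => ?_⟩
  have hsq := abs_pow_le_one_add_pow_two_mul u (i := 2) (m := m) (by omega)
  rw [sq_abs] at hsq
  linarith [le_abs_self (p.eval u), hS u]

lemma tendsto_integral_exp_sub_mul_pow_atTop {f : ℝ → ℝ} (hf : Continuous f) {m : ℕ}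
    {c₀ B : ℝ} (hB : ∀ u, f u - c₀ * u ^ (2 * m) ≤ B - u ^ 2) :
    Tendsto (fun c => ∫ u, exp (f u - c * u ^ (2 * m))) atTop (𝓝 0) := by
  have hpow : ∀ u : ℝ, 0 ≤ u ^ (2 * m) := fun u => (even_two_mul m).pow_nonneg u
  have hbound : ∀ᶠ c in atTop, ∀ᵐ u, ‖exp (f u - c * u ^ (2 * m))‖ ≤ exp (B - u ^ 2) := by
    filter_upwards [eventually_ge_atTop c₀] with c hc
    refine .of_forall fun u => ?_
    rw [norm_eq_abs, abs_exp, exp_le_exp]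
    nlinarith [hB u, hpow u]
  have hlim : ∀ᵐ u, Tendsto (fun c => exp (f u - c * u ^ (2 * m))) atTop (𝓝 0) := by
    filter_upwards [Measure.ae_ne volume 0] with u hu
    have hpos : 0 < u ^ (2 * m) := (even_two_mul m).pow_pos hu
    refine tendsto_exp_atBot.comp (tendsto_atBot_add_const_left _ (f u) ?_)
    exact tendsto_neg_atTop_atBot.comp (tendsto_id.atTop_mul_const hpos)
  simpa using tendsto_integral_filter_of_dominated_convergence _
    (.of_forall fun c => (by fun_prop : Continuous _).aestronglyMeasurable) hbound
    (by simpa using integrable_exp_sub_sq B 0) hlim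

theorem exists_polynomial_iteratedDeriv_eq_and_integral_exp_lt_one (k : ℕ) (x : ℝ)
    (y : Fin (k + 1) → ℝ) :
    ∃ (Q : ℝ[X]) (B : ℝ), (∀ j : Fin (k + 1), iteratedDeriv j (fun t => Q.eval t) x = y j) ∧
      (∀ t, Q.eval t ≤ B - (t - x) ^ 2) ∧ ∫ t, exp (Q.eval t) < 1 := by
  set p : ℝ[X] := ∑ i : Fin (k + 1), monomial i (y i / i !)
  have hcoeff (j : Fin (k + 1)) : p.coeff j = y j / j ! := by
    simp [p, coeff_monomial, Fin.val_inj]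
  have hdeg : p.natDegree ≤ 2 * (k + 1) :=
    natDegree_sum_le_of_forall_le _ _ fun i _ => (natDegree_monomial_le _).trans (by omega)
  obtain ⟨c₀, B, hB⟩ := p.exists_eval_sub_mul_pow_le (by omega) hdeg
  set Q : ℝ → ℝ[X] := fun c => (p - C c * X ^ (2 * (k + 1))).comp (X - C x)
  have hQ (c t : ℝ) : (Q c).eval t = p.eval (t - x) - c * (t - x) ^ (2 * (k + 1)) := by
    simp [Q]
  have hlim : Tendsto (fun c => ∫ t, exp ((Q c).eval t)) atTop (𝓝 0) := by
    refine (tendsto_integral_exp_sub_mul_pow_atTop p.continuous hB).congr fun c => ?_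
    simp only [hQ]
    exact (integral_sub_right_eq_self (fun u => exp (p.eval u - c * u ^ (2 * (k + 1)))) x).symm
  obtain ⟨c, hc₀, hc⟩ := ((eventually_ge_atTop c₀).and (hlim.eventually_lt_const one_pos)).exists
  refine ⟨Q c, B, fun j => ?_, fun t => ?_, hc⟩
  · rw [iteratedDeriv_eval_comp_X_sub_C_self, coeff_sub, coeff_C_mul_X_pow,
      if_neg (by omega), sub_zero, hcoeff]
    field_simp
  · rw [hQ]
    nlinarith [hB (t - x), (even_two_mul (k + 1)).pow_nonneg (t - x)]

lemma exists_smooth_density_notMem_tsupport (x : ℝ) :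
    ∃ ρ : ℝ → ℝ, ContDiff ℝ ∞ ρ ∧ (∀ t, 0 ≤ ρ t) ∧ HasCompactSupport ρ ∧ x ∉ tsupport ρ ∧
      ∫ t, ρ t = 1 := by
  let b : ContDiffBump (x + 2) := ⟨1 / 2, 1, by norm_num, by norm_num⟩
  refine ⟨b.normed volume, b.contDiff_normed, b.nonneg_normed, b.hasCompactSupport_normed, ?_,
    b.integral_normed⟩
  rw [b.tsupport_normed_eq]
  simp [b]

theorem statement14_general (k : ℕ) (x : ℝ) (y : Fin (k + 1) → ℝ) :
    ∃ q : ℝ → ℝ, memP q ∧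
      ∀ j : Fin (k + 1), iteratedDeriv (j : ℕ) (fun t => Real.log (q t)) x = y j := by
  obtain ⟨Q, B, hjet, hQ, hQint⟩ :=
    exists_polynomial_iteratedDeriv_eq_and_integral_exp_lt_one k x y
  obtain ⟨ρ, hρ, hρ0, hρc, hxρ, hρint⟩ := exists_smooth_density_notMem_tsupport x
  set s := 1 - ∫ t, exp (Q.eval t)
  have hxg : x ∉ tsupport fun t => s * ρ t := fun h => hxρ (tsupport_mul_subset_right h)
  refine ⟨fun t => exp (Q.eval t) + s * ρ t, memP_exp_eval_add hQ
    (contDiff_const.mul (hρ.of_le (WithTop.coe_le_coe.2 le_top))) (fun t => mul_nonneg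
    (by linarith) (hρ0 t)) hρc.mul_left ?_, fun j => ?_⟩
  · rw [integral_const_mul, hρint]
    ring
  · rw [(log_exp_add_eventuallyEq_of_notMem_tsupport hxg).iteratedDeriv_eq]
    exact hjet j

theorem statement14 (k : ℕ) (hk : k ≤ 4) (x : ℝ) (y : Fin (k + 1) → ℝ) :
    ∃ q : ℝ → ℝ, memP q ∧
      ∀ j : Fin (k + 1), iteratedDeriv (j : ℕ) (fun t => Real.log (q t)) x = y j :=
  statement14_general k x y
end

section
/- Let k ∈ {0, 1, 2, 3}, and let a, b : ℝ^{2+k} → ℝ be continuously differentiable functions of the arguments (x, y_0, …, y_k). Suppose that for every p ∈ 𝒫 the function z(x) = ln p(x) solves the differential equation z^{(k+1)}(x) · a(x, z(x), z'(x), …, z^{(k)}(x)) = b(x, z(x), z'(x), …, z^{(k)}(x)) for all x ∈ ℝ. Then a(x, ln p(x), (ln p)'(x), …, (ln p)^{(k)}(x)) = 0 for every x ∈ ℝ and every p ∈ 𝒫. -/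
open MeasureTheory Filter Set

/-!
Any jet is the log-jet of a density in `𝒫`: for `y₀, …, yₙ` and `x₀`, let
`Q(u) = ∑_{j ≤ n} y_j u^j / j! + A u^(2n+2) - u^(2n+4)` and `q(t) = exp Q(t - x₀)`. Then
`(log q)⁽ʲ⁾(x₀) = y_j` for `j ≤ n`; `q ∈ 𝒫` because `Q(u) ≤ c - u²` and every derivative of
`exp ∘ Q` is a polynomial times `exp ∘ Q`; and `∫ q = 1` for a suitable `A` by the intermediate
value theorem, the mass being continuous in `A`, tending to `0` as `A → -∞` and at least `1` for
large `A`. Applying the equation at `x` to two such densities that share the `k`-jet of `log p`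
at `x` and have `(k+1)`-st log-derivative `0` and `1` gives `b = 0` and `a = b`.
-/

open Polynomial Real Topology
open scoped Nat

namespace Polynomial

lemma iteratedDeriv_eval_s17 (P : ℝ[X]) (n : ℕ) :
    iteratedDeriv n (fun x => P.eval x) = fun x => (derivative^[n] P).eval x := by
  induction n with
  | zero => rfl
  | succ n ih =>
    ext x
    rw [iteratedDeriv_succ, ih, Function.iterate_succ_apply', Polynomial.deriv]

lemma iteratedDeriv_eval_zero (P : ℝ[X]) (n : ℕ) :
    iteratedDeriv n (fun x => P.eval x) 0 = n ! * P.coeff n := by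
  simp [iteratedDeriv_eval_s17, ← coeff_zero_eq_eval_zero, coeff_iterate_derivative,
    Nat.descFactorial_self]

lemma tendsto_mul_eval {l : Filter ℝ} {w : ℝ → ℝ} (P : ℝ[X])
    (h : ∀ j ≤ P.natDegree, Tendsto (fun x => w x * x ^ j) l (𝓝 0)) :
    Tendsto (fun x => w x * P.eval x) l (𝓝 0) := by
  simp_rw [eval_eq_sum_range, Finset.mul_sum]
  rw [← Finset.sum_const_zero (s := Finset.range (P.natDegree + 1))]
  refine tendsto_finsetSum _ fun j hj => ?_
  simpa [mul_left_comm] using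
    (h j (Nat.lt_succ_iff.mp (Finset.mem_range.mp hj))).const_mul (P.coeff j)

lemma tendsto_eval_sub_pow_atTop {P : ℝ[X]} {m : ℕ} (hP : P.natDegree < 2 * m) :
    Tendsto (fun u => P.eval u - u ^ (2 * m)) atTop atBot := by
  have hdeg : (P - X ^ (2 * m)).natDegree = 2 * m := by
    rw [natDegree_sub_eq_right_of_natDegree_lt] <;> simp [hP]
  have hlead : (P - X ^ (2 * m)).leadingCoeff = -1 := by
    rw [leadingCoeff_sub_of_degree_lt' (degree_lt_degree (by simpa using hP))]
    simp
  have hpos : 0 < (P - X ^ (2 * m)).degree := by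
    rw [degree_eq_natDegree (by intro h; simp [h] at hlead), hdeg]
    exact_mod_cast (show 0 < 2 * m by omega)
  simpa using tendsto_atBot_of_leadingCoeff_nonpos _ hpos (by rw [hlead]; norm_num)

lemma exists_eval_le_add_pow {P : ℝ[X]} {m : ℕ} (hP : P.natDegree < 2 * m) :
    ∃ c, ∀ u, P.eval u ≤ c + u ^ (2 * m) := by
  have hneg : (P.comp (-X)).natDegree < 2 * m := by simpa [natDegree_comp] using hP
  have hlim : Tendsto (fun u => P.eval u - u ^ (2 * m)) (cocompact ℝ) atBot := by
    rw [cocompact_eq_atBot_atTop, tendsto_sup]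
    refine ⟨?_, tendsto_eval_sub_pow_atTop hP⟩
    simpa [Function.comp_def, Even.neg_pow (even_two_mul m)] using
      (tendsto_eval_sub_pow_atTop hneg).comp tendsto_neg_atBot_atTop
  obtain ⟨u₀, hu₀⟩ := (P.continuous.sub (continuous_pow _)).exists_forall_ge' 0
    (hlim.eventually_le_atBot _)
  refine ⟨P.eval u₀ - u₀ ^ (2 * m), fun u => ?_⟩
  have := hu₀ u
  simp only [Pi.sub_apply] at this
  linarith

end Polynomial

noncomputable def expDerivPoly (Q : ℝ[X]) : ℕ → ℝ[X]
  | 0 => 1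
  | n + 1 => derivative (expDerivPoly Q n) + expDerivPoly Q n * derivative Q

lemma iteratedDeriv_exp_eval (Q : ℝ[X]) (n : ℕ) :
    iteratedDeriv n (fun u => exp (Q.eval u)) =
      fun u => (expDerivPoly Q n).eval u * exp (Q.eval u) := by
  induction n with
  | zero => ext u; simp [expDerivPoly]
  | succ n ih =>
    ext u
    have h : HasDerivAt (fun u => (expDerivPoly Q n).eval u * exp (Q.eval u))
        ((expDerivPoly Q n).derivative.eval u * exp (Q.eval u) +
          (expDerivPoly Q n).eval u * (exp (Q.eval u) * Q.derivative.eval u)) u :=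
      ((expDerivPoly Q n).hasDerivAt u).mul (Q.hasDerivAt u).exp
    rw [iteratedDeriv_succ, ih, h.deriv]
    simp only [expDerivPoly, eval_add, eval_mul]
    ring

lemma integrable_exp_of_le_sub_sq {f : ℝ → ℝ} {c : ℝ} (hf : Continuous f)
    (hle : ∀ u, f u ≤ c - u ^ 2) : Integrable fun u => exp (f u) := by
  refine ((integrable_exp_neg_mul_sq one_pos).const_mul (exp c)).mono'
    hf.rexp.aestronglyMeasurable (Eventually.of_forall fun u => ?_)
  rw [norm_of_nonneg (exp_nonneg _), ← exp_add]
  exact exp_le_exp.mpr (by linarith [hle u])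

lemma tendsto_rpow_abs_mul_eval_cocompact {s : ℝ} {P : ℝ[X]} (hs : P.natDegree < -s) :
    Tendsto (fun x => |x| ^ s * P.eval x) (cocompact ℝ) (𝓝 0) := by
  refine P.tendsto_mul_eval fun j hj => ?_
  rw [tendsto_zero_iff_norm_tendsto_zero]
  have hlim : Tendsto (fun x : ℝ => |x| ^ (s + j)) (cocompact ℝ) (𝓝 0) := by
    have := tendsto_rpow_neg_atTop (y := -(s + j)) (by
      have : (j : ℝ) ≤ P.natDegree := by exact_mod_cast hj
      linarith)
    simpa [Function.comp_def] using this.comp (tendsto_norm_cocompact_atTop (E := ℝ))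
  refine hlim.congr'
    (Eventually.mono (isCompact_singleton (x := (0 : ℝ))).compl_mem_cocompact fun x hx => ?_)
  simp only [norm_mul, norm_pow, norm_of_nonneg (rpow_nonneg (abs_nonneg x) s), Real.norm_eq_abs,
    rpow_add (abs_pos.mpr hx), rpow_natCast]

lemma tendsto_rpow_abs_mul_eval_mul_exp_neg_sq (s : ℝ) (P : ℝ[X]) :
    Tendsto (fun x => |x| ^ s * exp (-1 * x ^ 2) * P.eval x) (cocompact ℝ) (𝓝 0) := by
  refine P.tendsto_mul_eval fun j _ => ?_
  rw [tendsto_zero_iff_norm_tendsto_zero]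
  refine (tendsto_rpow_abs_mul_exp_neg_mul_sq_cocompact one_pos (s + j)).congr'
    (Eventually.mono (isCompact_singleton (x := (0 : ℝ))).compl_mem_cocompact fun x hx => ?_)
  simp only [norm_mul, norm_pow, norm_of_nonneg (rpow_nonneg (abs_nonneg x) s),
    norm_of_nonneg (exp_nonneg _), Real.norm_eq_abs, rpow_add (abs_pos.mpr hx), rpow_natCast]
  ring

lemma memP_exp_eval {Q : ℝ[X]} {c : ℝ} (hQ : ∀ u, Q.eval u ≤ c - u ^ 2)
    (hint : ∫ u, exp (Q.eval u) = 1) : memP fun u => exp (Q.eval u) := by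
  have hcocompact : (atTop ⊔ atBot : Filter ℝ) = cocompact ℝ := by
    rw [cocompact_eq_atBot_atTop, sup_comm]
  have hsmooth : ContDiff ℝ 4 fun u => Q.eval u := by
    simpa using Q.contDiff_aeval (𝕜 := ℝ) 4
  refine ⟨hint, fun u => exp_pos _, contDiff_exp.comp hsmooth, fun m _ j _ => ?_, ?_⟩
  · rw [hcocompact, iteratedDeriv_exp_eval]
    have hlim := (tendsto_rpow_abs_mul_eval_mul_exp_neg_sq m (expDerivPoly Q j)).norm.const_mul
      (exp c)
    rw [norm_zero, mul_zero] at hlim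
    refine squeeze_zero_norm (fun x => ?_) hlim
    have hexp : exp (Q.eval x) ≤ exp c * exp (-1 * x ^ 2) := by
      rw [← exp_add]; exact exp_le_exp.mpr (by linarith [hQ x])
    simp only [norm_mul, norm_of_nonneg (exp_nonneg _)]
    calc _ = ‖|x| ^ m‖ * ‖(expDerivPoly Q j).eval x‖ * exp (Q.eval x) := by ring
      _ ≤ ‖|x| ^ m‖ * ‖(expDerivPoly Q j).eval x‖ * (exp c * exp (-1 * x ^ 2)) := by gcongr
      _ = _ := by ring
  · refine ⟨(Finset.range 5).sup (fun j => (expDerivPoly Q j).natDegree) + 1, by positivity,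
      fun j _ hj => ?_⟩
    rw [hcocompact, iteratedDeriv_exp_eval]
    simp only [mul_div_cancel_right₀ _ (exp_ne_zero _)]
    refine tendsto_rpow_abs_mul_eval_cocompact ?_
    have : (expDerivPoly Q j).natDegree ≤ (Finset.range 5).sup
        (fun j => (expDerivPoly Q j).natDegree) :=
      Finset.le_sup (f := fun j => (expDerivPoly Q j).natDegree)
        (Finset.mem_range.mpr (by omega))
    rw [neg_neg]
    exact_mod_cast Nat.lt_succ_of_le this

section Normalization

variable {f g : ℝ → ℝ}

lemma continuous_integral_exp_add_mul (hg : 0 ≤ g)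
    (hint : ∀ A, Integrable fun u => exp (f u + A * g u)) :
    Continuous fun A => ∫ u, exp (f u + A * g u) := by
  refine continuous_iff_continuousAt.mpr fun A₀ => continuousAt_of_dominated
    (bound := fun u => exp (f u + (A₀ + 1) * g u))
    (Eventually.of_forall fun A => (hint A).aestronglyMeasurable) ?_ (hint (A₀ + 1))
    (ae_of_all _ fun u => by fun_prop)
  filter_upwards [Iio_mem_nhds (lt_add_one A₀)] with A hA
  refine ae_of_all _ fun u => ?_
  rw [norm_of_nonneg (exp_nonneg _)]
  exact exp_le_exp.mpr (by gcongr; exacts [hg u, hA.out.le])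

lemma tendsto_integral_exp_add_mul_atBot (hg : 0 ≤ g) (hg_pos : ∀ᵐ u, 0 < g u)
    (hint : ∀ A, Integrable fun u => exp (f u + A * g u)) :
    Tendsto (fun A => ∫ u, exp (f u + A * g u)) atBot (𝓝 0) := by
  have h := tendsto_integral_filter_of_dominated_convergence (l := atBot) (f := fun _ => 0)
    (fun u => exp (f u + 0 * g u)) (Eventually.of_forall fun A => (hint A).aestronglyMeasurable)
    ?_ (hint 0) ?_
  · simpa using h
  · filter_upwards [eventually_le_atBot 0] with A hA
    refine ae_of_all _ fun u => ?_
    rw [norm_of_nonneg (exp_nonneg _)]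
    exact exp_le_exp.mpr (by gcongr; exact hg u)
  · filter_upwards [hg_pos] with u hu
    exact tendsto_exp_atBot.comp
      (tendsto_atBot_add_const_left _ _ (tendsto_id.atBot_mul_const hu))

lemma exists_integral_exp_add_mul_eq_one (hf : Continuous f) (hg : 0 ≤ g)
    (hg_pos : ∀ᵐ u, 0 < g u) (hg_one : ∀ u ∈ Icc (1 : ℝ) 2, 1 ≤ g u)
    (hint : ∀ A, Integrable fun u => exp (f u + A * g u)) :
    ∃ A, ∫ u, exp (f u + A * g u) = 1 := by
  obtain ⟨M, hM⟩ := isCompact_Icc.exists_bound_of_continuousOn (f := f) hf.continuousOn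
  have hM0 : 0 ≤ M := (norm_nonneg _).trans (hM 1 ⟨le_rfl, one_le_two⟩)
  have hlarge : 1 ≤ ∫ u, exp (f u + M * g u) := by
    have hone : ∀ u ∈ Icc (1 : ℝ) 2, 1 ≤ exp (f u + M * g u) := fun u hu => by
      have := neg_le_of_abs_le (hM u hu)
      exact one_le_exp (by nlinarith [hg_one u hu])
    calc (1 : ℝ) = 1 * volume.real (Icc (1 : ℝ) 2) := by norm_num [Real.volume_real_Icc]
      _ ≤ ∫ u in Icc (1 : ℝ) 2, exp (f u + M * g u) :=
        setIntegral_ge_of_const_le_real measurableSet_Icc (by simp) hone (hint M).integrableOn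
      _ ≤ ∫ u, exp (f u + M * g u) :=
        setIntegral_le_integral (hint M) (ae_of_all _ fun u => exp_nonneg _)
  obtain ⟨A₀, hA₀⟩ := ((tendsto_integral_exp_add_mul_atBot hg hg_pos hint).eventually_le_const
    one_pos).exists
  exact mem_range_of_exists_le_of_exists_ge (continuous_integral_exp_add_mul hg hint)
    ⟨A₀, hA₀⟩ ⟨M, hlarge⟩

end Normalization

noncomputable def logDensityPoly (n : ℕ) (y : ℕ → ℝ) (A : ℝ) : ℝ[X] :=
  ∑ j ∈ Finset.range (n + 1), C (y j / j !) * X ^ j + C A * X ^ (2 * n + 2) - X ^ (2 * n + 4)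

lemma eval_logDensityPoly (n : ℕ) (y : ℕ → ℝ) (A u : ℝ) :
    (logDensityPoly n y A).eval u = (logDensityPoly n y 0).eval u + A * u ^ (2 * n + 2) := by
  simp only [logDensityPoly, eval_add, eval_sub, eval_mul, eval_C, eval_pow, eval_X, zero_mul,
    add_zero]
  ring

lemma coeff_logDensityPoly {n j : ℕ} (y : ℕ → ℝ) (A : ℝ) (hj : j ≤ n) :
    (logDensityPoly n y A).coeff j = y j / j ! := by
  simp only [logDensityPoly, coeff_sub, coeff_add, finsetSum_coeff, coeff_C_mul, coeff_X_pow]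
  rw [Finset.sum_eq_single_of_mem j (Finset.mem_range.mpr (by omega))
    fun i _ hi => by simp [Ne.symm hi]]
  simp [show j ≠ 2 * n + 2 by omega, show j ≠ 2 * n + 4 by omega]

lemma exists_eval_logDensityPoly_le (n : ℕ) (y : ℕ → ℝ) (A : ℝ) :
    ∃ c, ∀ u, (logDensityPoly n y A).eval u ≤ c - 2 * u ^ 2 := by
  set P : ℝ[X] := ∑ j ∈ Finset.range (n + 1), C (y j / j !) * X ^ j + C A * X ^ (2 * n + 2) +
    C 2 * X ^ 2
  have hP : P.natDegree < 2 * (n + 2) := by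
    refine lt_of_le_of_lt (natDegree_add_le_of_degree_le (natDegree_add_le_of_degree_le
      (natDegree_sum_le_of_forall_le _ _ fun j hj => ?_) ?_) ?_) (by omega : 2 * n + 2 < _)
    · exact (natDegree_C_mul_X_pow_le _ _).trans (by have := Finset.mem_range.mp hj; omega)
    · exact natDegree_C_mul_X_pow_le _ _
    · exact (natDegree_C_mul_X_pow_le _ _).trans (by omega)
  obtain ⟨c, hc⟩ := exists_eval_le_add_pow hP
  refine ⟨c, fun u => ?_⟩
  have := hc u
  simp only [P, logDensityPoly, eval_add, eval_sub, eval_mul, eval_C, eval_pow, eval_X] at this ⊢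
  rw [show 2 * (n + 2) = 2 * n + 4 by ring] at this
  linarith

lemma exists_memP_iteratedDeriv_log_eq (x₀ : ℝ) (n : ℕ) (y : ℕ → ℝ) :
    ∃ q, memP q ∧ ∀ j ≤ n, iteratedDeriv j (fun t => log (q t)) x₀ = y j := by
  have hint : ∀ A, Integrable fun u => exp ((logDensityPoly n y A).eval u) := fun A => by
    obtain ⟨c, hc⟩ := exists_eval_logDensityPoly_le n y A
    exact integrable_exp_of_le_sub_sq (logDensityPoly n y A).continuous
      fun u => by nlinarith [hc u, sq_nonneg u]
  obtain ⟨A, hA⟩ := exists_integral_exp_add_mul_eq_one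
    (f := fun u => (logDensityPoly n y 0).eval u) (g := fun u => u ^ (2 * n + 2))
    (logDensityPoly n y 0).continuous
    (fun u => (even_two_mul (n + 1)).pow_nonneg u)
    ((volume.ae_ne 0).mono fun u hu => (even_two_mul (n + 1)).pow_pos hu)
    (fun u hu => one_le_pow₀ hu.1) (fun A => by simpa only [← eval_logDensityPoly] using hint A)
  simp only [← eval_logDensityPoly] at hA
  obtain ⟨c, hc⟩ := exists_eval_logDensityPoly_le n y A
  refine ⟨fun t => exp ((logDensityPoly n y A).eval (t - x₀)), ?_, fun j hj => ?_⟩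
  · have hQ : ∀ u, ((logDensityPoly n y A).comp (X - C x₀)).eval u ≤ c + 2 * x₀ ^ 2 - u ^ 2 :=
      fun u => by
        simp only [eval_comp, eval_sub, eval_X, eval_C]
        nlinarith [hc (u - x₀), sq_nonneg (u - 2 * x₀)]
    simpa using memP_exp_eval hQ (by simpa using (integral_sub_right_eq_self _ x₀).trans hA)
  · simp only [log_exp]
    rw [iteratedDeriv_comp_sub_const (f := fun u => (logDensityPoly n y A).eval u)]
    simp only [sub_self]
    rw [iteratedDeriv_eval_zero, coeff_logDensityPoly y A hj]
    field_simp

theorem statement17_general (k : ℕ)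
    (a b : ℝ → (Fin (k + 1) → ℝ) → ℝ)
    (hsol : ∀ p, memP p → ∀ x : ℝ,
      iteratedDeriv (k + 1) (fun t => Real.log (p t)) x *
        a x (fun j => iteratedDeriv (j : ℕ) (fun t => Real.log (p t)) x) =
      b x (fun j => iteratedDeriv (j : ℕ) (fun t => Real.log (p t)) x)) :
    ∀ p, memP p → ∀ x : ℝ,
      a x (fun j => iteratedDeriv (j : ℕ) (fun t => Real.log (p t)) x) = 0 := by
  intro p _ x
  set z := fun j : ℕ => iteratedDeriv j (fun t => log (p t)) x
  have hsol_jet : ∀ w, w * a x (fun j => z j) = b x (fun j => z j) := fun w => by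
    obtain ⟨q, hq, hjet⟩ :=
      exists_memP_iteratedDeriv_log_eq x (k + 1) fun j => if j ≤ k then z j else w
    have hlow : (fun j : Fin (k + 1) => iteratedDeriv j (fun t => log (q t)) x) =
        fun j : Fin (k + 1) => z j :=
      funext fun j => by rw [hjet j (by omega), if_pos (by omega)]
    simpa [hlow, hjet (k + 1) le_rfl] using hsol q hq x
  linarith [hsol_jet 0, hsol_jet 1]

theorem statement17 (k : ℕ) (hk : k ≤ 3)
    (a b : ℝ → (Fin (k + 1) → ℝ) → ℝ)
    (ha : ContDiff ℝ 1 (fun v : ℝ × (Fin (k + 1) → ℝ) => a v.1 v.2))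
    (hb : ContDiff ℝ 1 (fun v : ℝ × (Fin (k + 1) → ℝ) => b v.1 v.2))
    (hsol : ∀ p, memP p → ∀ x : ℝ,
      iteratedDeriv (k + 1) (fun t => Real.log (p t)) x *
        a x (fun j => iteratedDeriv (j : ℕ) (fun t => Real.log (p t)) x) =
      b x (fun j => iteratedDeriv (j : ℕ) (fun t => Real.log (p t)) x)) :
    ∀ p, memP p → ∀ x : ℝ,
      a x (fun j => iteratedDeriv (j : ℕ) (fun t => Real.log (p t)) x) = 0 :=
  statement17_general k a b hsol
end
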